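/- arXiv:1703.03276 — 6 statements merged into one kernel-verified Lean document; each statement's English description precedes it below -/
import Mathlib

section
/- If H is an open subgroup of a profinite group G with nonzero Möbius number μ(H,G) ≠ 0, then H is an intersection of maximal open subgroups of G. -/
open scoped Classical

/-- If `H` is a subgroup of a finite group `G` with nonzero Möbius number
`μ(H,G) ≠ 0` (where `μ` is the Möbius function of the subgroup lattice of `G`,
characterized by `∑_{K ≤ L ≤ G} μ(L,G) = [K = G]`), then `H` is an
intersection of maximal subgroups of `G`. -/
theorem mobius_ne_zero_imp_intersection_of_maximals
    (G : Type*) [Group G] [Finite G]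
    (μ : Subgroup G → ℤ)
    (hμ : ∀ K : Subgroup G,
      (∑ᶠ L ∈ {L : Subgroup G | K ≤ L}, μ L) = if K = ⊤ then 1 else 0)
    (H : Subgroup G) (hH : μ H ≠ 0) :
    H = sInf {M : Subgroup G | IsCoatom M ∧ H ≤ M} := by
  have : Fintype (Subgroup G) := Fintype.ofFinite _
  have hμ' : ∀ K : Subgroup G,
      (∑ L ∈ Finset.univ.filter (fun L => K ≤ L), μ L) = if K = ⊤ then 1 else 0 := by
    intro K
    rw [← hμ K, ← finsum_mem_coe_finset]
    congr 1
    ext L; simp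
  have wf : WellFounded ((· > ·) : Subgroup G → Subgroup G → Prop) := wellFounded_gt
  revert hH
  refine wf.induction
    (C := fun K => μ K ≠ 0 → K = sInf {M : Subgroup G | IsCoatom M ∧ K ≤ M}) H ?_
  intro K IH hK
  set J := sInf {M : Subgroup G | IsCoatom M ∧ K ≤ M} with hJdef
  have hKJ : K ≤ J := le_sInf (fun M hM => hM.2)
  by_contra hne
  have hKltJ : K < J := lt_of_le_of_ne hKJ hne
  have hKtop : K ≠ ⊤ := by
    rintro rfl
    apply hne
    have hempty : {M : Subgroup G | IsCoatom M ∧ (⊤ : Subgroup G) ≤ M} = ∅ := by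
      ext M
      simp only [Set.mem_setOf_eq, Set.mem_empty_iff_false, iff_false, not_and]
      intro hM hle
      exact hM.1 (top_le_iff.mp hle)
    rw [hJdef, hempty, sInf_empty]
  have hJtop : J ≠ ⊤ := by
    rcases eq_top_or_exists_le_coatom K with h' | ⟨M, hM, hKM⟩
    · exact absurd h' hKtop
    · intro hJt
      have : J ≤ M := sInf_le ⟨hM, hKM⟩
      rw [hJt] at this
      exact hM.1 (top_le_iff.mp this)
  have h1 := hμ' K
  rw [if_neg hKtop] at h1
  have h2 := hμ' J
  rw [if_neg hJtop] at h2
  have hsplit : (Finset.univ.filter (fun L => K ≤ L)) =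
      insert K (Finset.univ.filter (fun L => K < L)) := by
    ext L
    simp only [Finset.mem_filter, Finset.mem_univ, true_and, Finset.mem_insert]
    constructor
    · intro h
      rcases lt_or_eq_of_le h with h' | h'
      · exact Or.inr h'
      · exact Or.inl h'.symm
    · rintro (rfl | h)
      · exact le_refl _
      · exact le_of_lt h
  rw [hsplit, Finset.sum_insert (by simp)] at h1
  have hsub : Finset.univ.filter (fun L => J ≤ L) ⊆ Finset.univ.filter (fun L => K < L) := by
    intro L hL
    simp only [Finset.mem_filter, Finset.mem_univ, true_and] at hL ⊢
    exact lt_of_lt_of_le hKltJ hL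
  have hzero : ∀ L ∈ Finset.univ.filter (fun L => K < L),
      L ∉ Finset.univ.filter (fun L => J ≤ L) → μ L = 0 := by
    intro L hL hL'
    simp only [Finset.mem_filter, Finset.mem_univ, true_and] at hL hL'
    by_contra hμL
    apply hL'
    have hLeq := IH L hL hμL
    have hsubset : {M : Subgroup G | IsCoatom M ∧ L ≤ M} ⊆
        {M : Subgroup G | IsCoatom M ∧ K ≤ M} := by
      rintro M ⟨hM, hLM⟩
      exact ⟨hM, le_trans (le_of_lt hL) hLM⟩
    calc J ≤ sInf {M : Subgroup G | IsCoatom M ∧ L ≤ M} := sInf_le_sInf hsubset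
    _ = L := hLeq.symm
  rw [← Finset.sum_subset hsub hzero, h2, add_zero] at h1
  exact hK h1
end

section
/- Let G be a group with polynomial maximal subgroup growth exponent α (i.e., the number of maximal subgroups of index n is at most n^α for all n), and suppose every subgroup H of index n that is an intersection of maximal subgroups can be written as H = M₁ ∩ ⋯ ∩ M_t with |G:M₁|⋯|G:M_t| ≤ n^η. Then the number c_n(G) of index-n subgroups of G that are intersections of maximal subgroups satisfies c_n(G) ≤ (n^η(n^η+1)/2)·n^{ηα} for all n ≥ 2. -/
/-!
Write an index-`n` maximal intersection as `M₁ ∩ ⋯ ∩ M_t` with `∏ |G:Mᵢ| ≤ N = ⌊n^η⌋`.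
Every `|G:Mᵢ|` divides `n`, so the indices form an ordered factorization, into factors `≥ 2`,
of an integer `≤ N`. There are at most `N(N+1)/2` such factorizations, and above a fixed
factorization `(k₁, …, k_t)` lie at most `∏ kᵢ^α ≤ N^α` tuples of maximal subgroups.
-/

/-- A subgroup is a *maximal intersection* if it is an intersection of finitely
many maximal subgroups (the empty intersection giving the whole group). -/
def IsMaximalIntersection {G : Type*} [Group G] (H : Subgroup G) : Prop :=
  ∃ s : Finset (Subgroup G), (∀ M ∈ s, IsCoatom M) ∧ H = s.inf id

open Finset

section ListsOver

variable {β γ : Type*}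

theorem setOf_map_eq_nil (P : β → Prop) (f : β → γ) :
    {l : List β | (∀ b ∈ l, P b) ∧ l.map f = []} = {[]} := by
  ext l
  rcases l with _ | ⟨b, l⟩ <;> simp

theorem setOf_map_eq_cons (P : β → Prop) (f : β → γ) (c : γ) (w : List γ) :
    {l : List β | (∀ b ∈ l, P b) ∧ l.map f = c :: w} =
      (fun p : β × List β => p.1 :: p.2) ''
        ({b | P b ∧ f b = c} ×ˢ {l | (∀ b ∈ l, P b) ∧ l.map f = w}) := by
  ext l
  rcases l with _ | ⟨b, l⟩ <;> aesop

theorem finite_setOf_map_eq {P : β → Prop} {f : β → γ}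
    (hfib : ∀ c, {b | P b ∧ f b = c}.Finite) :
    ∀ w : List γ, {l : List β | (∀ b ∈ l, P b) ∧ l.map f = w}.Finite
  | [] => by rw [setOf_map_eq_nil]; simp
  | c :: w => by
    rw [setOf_map_eq_cons]
    exact ((hfib c).prod (finite_setOf_map_eq hfib w)).image _

theorem ncard_setOf_map_eq (P : β → Prop) (f : β → γ) :
    ∀ w : List γ, {l : List β | (∀ b ∈ l, P b) ∧ l.map f = w}.ncard =
      (w.map fun c => {b | P b ∧ f b = c}.ncard).prod
  | [] => by rw [setOf_map_eq_nil]; simp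
  | c :: w => by
    have hcons : (fun p : β × List β => p.1 :: p.2).Injective :=
      fun p q h => Prod.ext (List.cons.inj h).1 (List.cons.inj h).2
    rw [setOf_map_eq_cons, Set.ncard_image_of_injective _ hcons, Set.ncard_prod,
      ncard_setOf_map_eq P f w, List.map_cons, List.prod_cons]

end ListsOver

section OrderedFactorizations

def orderedFactorizationsLE (N : ℕ) : Set (List ℕ) :=
  {w | (∀ d ∈ w, 2 ≤ d) ∧ w.prod ≤ N}

theorem orderedFactorizationsLE_zero : orderedFactorizationsLE 0 = ∅ := by
  refine Set.eq_empty_of_forall_notMem fun w ⟨h2, h0⟩ => ?_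
  have : 0 < w.prod := List.prod_pos fun d hd => by have := h2 d hd; omega
  omega

theorem orderedFactorizationsLE_subset (N : ℕ) :
    orderedFactorizationsLE N ⊆
      insert [] (⋃ d ∈ Icc 2 N, List.cons d '' orderedFactorizationsLE (N / d)) := by
  rintro (_ | ⟨a, w⟩) ⟨h2, hprod⟩
  · exact Set.mem_insert _ _
  have ha : 2 ≤ a := h2 a List.mem_cons_self
  have hw2 : ∀ d ∈ w, 2 ≤ d := fun d hd => h2 d (List.mem_cons_of_mem a hd)
  have hw : 0 < w.prod := List.prod_pos fun d hd => by have := hw2 d hd; omega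
  rw [List.prod_cons] at hprod
  refine Set.mem_insert_of_mem _ (Set.mem_biUnion (mem_Icc.mpr ⟨ha, ?_⟩) ⟨w, ⟨hw2, ?_⟩, rfl⟩)
  · nlinarith
  · rw [Nat.le_div_iff_mul_le (by omega)]
    linarith

theorem finite_orderedFactorizationsLE (N : ℕ) : (orderedFactorizationsLE N).Finite := by
  induction N using Nat.strong_induction_on with
  | _ N ih =>
    refine ((Icc 2 N).finite_toSet.biUnion fun d hd => ?_).insert [] |>.subset
      (orderedFactorizationsLE_subset N)
    obtain ⟨hd2, hdN⟩ := mem_Icc.mp hd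
    exact (ih _ (Nat.div_lt_self (by omega) hd2)).image _

theorem sum_sq_div_add_le_sq (N : ℕ) : ∑ d ∈ Icc 2 N, (N / d) ^ 2 + N ≤ N ^ 2 := by
  rcases N.eq_zero_or_pos with rfl | hN
  · simp
  -- `(N / d)² ≤ N² / (d (d - 1)) = N² / (d - 1) - N² / d` telescopes to `N² - N`.
  set f : ℕ → ℝ := fun d => -(N : ℝ) ^ 2 / ((d : ℝ) - 1)
  have hterm : ∀ d ∈ Ico 2 (N + 1), ((N / d : ℕ) : ℝ) ^ 2 ≤ f (d + 1) - f d := by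
    intro d hd
    have hd : (2 : ℝ) ≤ d := by exact_mod_cast (mem_Ico.mp hd).1
    have hd1 : (d : ℝ) - 1 ≠ 0 := by linarith
    simp only [f, Nat.cast_add, Nat.cast_one, add_sub_cancel_right]
    calc ((N / d : ℕ) : ℝ) ^ 2 ≤ ((N : ℝ) / d) ^ 2 := by gcongr; exact Nat.cast_div_le
      _ ≤ (N : ℝ) ^ 2 / (d * (d - 1)) := by rw [div_pow]; gcongr <;> nlinarith
      _ = _ := by field_simp; ring
  have htelescope : ∑ d ∈ Ico 2 (N + 1), (f (d + 1) - f d) = (N : ℝ) ^ 2 - N := by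
    have : (N : ℝ) ≠ 0 := by positivity
    rw [Finset.sum_Ico_sub _ (by omega)]
    simp only [f, Nat.cast_add, Nat.cast_one, Nat.cast_ofNat, add_sub_cancel_right]
    field_simp
    ring
  have hsum := Finset.sum_le_sum hterm
  rw [htelescope, Finset.Ico_add_one_right_eq_Icc] at hsum
  exact_mod_cast (by push_cast; linarith :
    ((∑ d ∈ Icc 2 N, (N / d) ^ 2 + N : ℕ) : ℝ) ≤ ((N ^ 2 : ℕ) : ℝ))

-- The bound `N * (N + 1)` itself does not survive the recursion on the first factor.
theorem two_mul_ncard_orderedFactorizationsLE_le (N : ℕ) :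
    2 * (orderedFactorizationsLE N).ncard ≤ N ^ 2 + 1 := by
  induction N using Nat.strong_induction_on with
  | _ N ih =>
    rcases N.eq_zero_or_pos with rfl | hN
    · simp [orderedFactorizationsLE_zero]
    have hfin : (⋃ d ∈ Icc 2 N, List.cons d '' orderedFactorizationsLE (N / d)).Finite :=
      (Icc 2 N).finite_toSet.biUnion fun d _ => (finite_orderedFactorizationsLE _).image _
    have hrec : (orderedFactorizationsLE N).ncard ≤
        1 + ∑ d ∈ Icc 2 N, (orderedFactorizationsLE (N / d)).ncard :=
      calc (orderedFactorizationsLE N).ncard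
          ≤ (insert [] (⋃ d ∈ Icc 2 N, List.cons d '' orderedFactorizationsLE (N / d))).ncard :=
            Set.ncard_le_ncard (orderedFactorizationsLE_subset N) (hfin.insert _)
        _ ≤ (⋃ d ∈ Icc 2 N, List.cons d '' orderedFactorizationsLE (N / d)).ncard + 1 :=
            Set.ncard_insert_le _ _
        _ ≤ ∑ d ∈ Icc 2 N, (List.cons d '' orderedFactorizationsLE (N / d)).ncard + 1 :=
            Nat.add_le_add_right (Finset.set_ncard_biUnion_le _ _) 1
        _ ≤ 1 + ∑ d ∈ Icc 2 N, (orderedFactorizationsLE (N / d)).ncard := by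
            rw [add_comm]
            exact Nat.add_le_add_left (Finset.sum_le_sum fun d _ =>
              Set.ncard_image_le (finite_orderedFactorizationsLE _)) 1
    have hih : ∑ d ∈ Icc 2 N, 2 * (orderedFactorizationsLE (N / d)).ncard ≤
        ∑ d ∈ Icc 2 N, ((N / d) ^ 2 + 1) :=
      Finset.sum_le_sum fun d hd => ih _ (Nat.div_lt_self hN (mem_Icc.mp hd).1)
    rw [← Finset.mul_sum, Finset.sum_add_distrib, Finset.sum_const, Nat.card_Icc,
      smul_eq_mul, mul_one] at hih
    have := sum_sq_div_add_le_sq N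
    omega

theorem two_mul_ncard_orderedFactorizationsLE_le_mul_succ (N : ℕ) :
    2 * (orderedFactorizationsLE N).ncard ≤ N * (N + 1) := by
  rcases N.eq_zero_or_pos with rfl | hN
  · simp [orderedFactorizationsLE_zero]
  · nlinarith [two_mul_ncard_orderedFactorizationsLE_le N]

end OrderedFactorizations

section Coatoms

variable {G : Type*} [Group G]

theorem Subgroup.two_le_index_of_isCoatom {H M : Subgroup G} (hM : IsCoatom M) (hHM : H ≤ M)
    (hH : H.index ≠ 0) : 2 ≤ M.index := by
  have hM0 : M.index ≠ 0 := fun h =>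
    hH (Nat.eq_zero_of_zero_dvd (h ▸ Subgroup.index_dvd_of_le hHM))
  have hM1 : M.index ≠ 1 := fun h => hM.1 (Subgroup.index_eq_one.mp h)
  omega

variable (G) in
def coatomTuples (N : ℕ) : Set (List (Subgroup G)) :=
  {l | (∀ M ∈ l, IsCoatom M) ∧ l.map Subgroup.index ∈ orderedFactorizationsLE N}

theorem coatomTuples_eq_biUnion (N : ℕ) :
    coatomTuples G N = ⋃ w ∈ (finite_orderedFactorizationsLE N).toFinset,
      {l | (∀ M ∈ l, IsCoatom M) ∧ l.map Subgroup.index = w} := by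
  ext l
  simp [coatomTuples]

theorem finite_coatomTuples (hfin : ∀ k : ℕ, {M : Subgroup G | IsCoatom M ∧ M.index = k}.Finite)
    (N : ℕ) : (coatomTuples G N).Finite := by
  rw [coatomTuples_eq_biUnion]
  exact (Finset.finite_toSet _).biUnion fun w _ => finite_setOf_map_eq hfin w

theorem ncard_coatomTuples_le {α : ℝ} (hα : 0 ≤ α)
    (hcard : ∀ k : ℕ, ({M : Subgroup G | IsCoatom M ∧ M.index = k}.ncard : ℝ) ≤ (k : ℝ) ^ α)
    (N : ℕ) :
    ((coatomTuples G N).ncard : ℝ) ≤ (orderedFactorizationsLE N).ncard * (N : ℝ) ^ α := by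
  have hfiber : ∀ w ∈ (finite_orderedFactorizationsLE N).toFinset,
      ({l : List (Subgroup G) | (∀ M ∈ l, IsCoatom M) ∧ l.map Subgroup.index = w}.ncard : ℝ) ≤
        (N : ℝ) ^ α := by
    intro w hw
    rw [Set.Finite.mem_toFinset] at hw
    rw [ncard_setOf_map_eq, Nat.cast_list_prod, List.map_map]
    calc (w.map fun k => (({M : Subgroup G | IsCoatom M ∧ M.index = k}.ncard : ℕ) : ℝ)).prod
        ≤ (w.map fun k : ℕ => (k : ℝ) ^ α).prod :=
          List.prod_map_le_prod_map₀ _ _ (fun _ _ => Nat.cast_nonneg _) fun k _ => hcard k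
      _ = (w.prod : ℝ) ^ α := by
          rw [Real.list_prod_map_rpow' _ _ (fun _ _ => Nat.cast_nonneg _), Nat.cast_list_prod]
      _ ≤ (N : ℝ) ^ α := by
          gcongr
          exact_mod_cast hw.2
  calc ((coatomTuples G N).ncard : ℝ)
      ≤ ∑ w ∈ (finite_orderedFactorizationsLE N).toFinset,
          ({l : List (Subgroup G) | (∀ M ∈ l, IsCoatom M) ∧ l.map Subgroup.index = w}.ncard
            : ℝ) := by
        rw [coatomTuples_eq_biUnion]
        exact_mod_cast Finset.set_ncard_biUnion_le _ _
    _ ≤ (finite_orderedFactorizationsLE N).toFinset.card * (N : ℝ) ^ α := by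
        simpa using Finset.sum_le_card_nsmul _ _ _ hfiber
    _ = (orderedFactorizationsLE N).ncard * (N : ℝ) ^ α := by
        rw [Set.ncard_eq_toFinset_card _ (finite_orderedFactorizationsLE N)]

theorem iInf_mem_image_coatomTuples {t : ℕ} {M : Fin t → Subgroup G} (hM : ∀ i, IsCoatom (M i))
    (hindex : (⨅ i, M i).index ≠ 0) {x : ℝ} (hx : ∏ i, ((M i).index : ℝ) ≤ x) :
    ⨅ i, M i ∈ (fun l => sInf {K | K ∈ l}) '' coatomTuples G ⌊x⌋₊ := by
  refine ⟨List.ofFn M, ⟨?_, ?_, ?_⟩, ?_⟩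
  · simpa [List.mem_ofFn] using hM
  · simpa [List.mem_ofFn] using
      fun i => Subgroup.two_le_index_of_isCoatom (hM i) (iInf_le M i) hindex
  · rw [List.map_ofFn, List.prod_ofFn]
    exact Nat.le_floor (by push_cast; exact hx)
  · simp only [List.mem_ofFn]
    exact sInf_range

end Coatoms

theorem card_maximal_intersections_le_general
    (G : Type*) [Group G] (α η : ℝ) (hα : 0 ≤ α)
    (hmax : ∀ k : ℕ, {M : Subgroup G | IsCoatom M ∧ M.index = k}.Finite ∧
      ({M : Subgroup G | IsCoatom M ∧ M.index = k}.ncard : ℝ) ≤ (k : ℝ) ^ α)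
    (n : ℕ) (hn : 2 ≤ n)
    (hint : ∀ H : Subgroup G, H.index = n → IsMaximalIntersection H →
      ∃ (t : ℕ) (M : Fin t → Subgroup G), (∀ i, IsCoatom (M i)) ∧
        H = ⨅ i, M i ∧ (∏ i, ((M i).index : ℝ)) ≤ (n : ℝ) ^ η) :
    {H : Subgroup G | H.index = n ∧ IsMaximalIntersection H}.Finite ∧
      ({H : Subgroup G | H.index = n ∧ IsMaximalIntersection H}.ncard : ℝ) ≤
        ((n : ℝ) ^ η * ((n : ℝ) ^ η + 1) / 2) * (n : ℝ) ^ (η * α) := by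
  set x := (n : ℝ) ^ η
  set N := ⌊x⌋₊
  have hU : (coatomTuples G N).Finite := finite_coatomTuples (fun k => (hmax k).1) N
  have hS : {H : Subgroup G | H.index = n ∧ IsMaximalIntersection H} ⊆
      (fun l => sInf {K | K ∈ l}) '' coatomTuples G N := by
    rintro H ⟨hH, hHmax⟩
    obtain ⟨t, M, hM, rfl, hprod⟩ := hint H hH hHmax
    exact iInf_mem_image_coatomTuples hM (by omega) hprod
  refine ⟨(hU.image _).subset hS, ?_⟩
  have hNx : (N : ℝ) ≤ x := Nat.floor_le (by positivity)
  have hW : (2 * (orderedFactorizationsLE N).ncard : ℝ) ≤ N * (N + 1) := by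
    exact_mod_cast two_mul_ncard_orderedFactorizationsLE_le_mul_succ N
  calc ({H : Subgroup G | H.index = n ∧ IsMaximalIntersection H}.ncard : ℝ)
      ≤ (coatomTuples G N).ncard := by
        exact_mod_cast (Set.ncard_le_ncard hS (hU.image _)).trans (Set.ncard_image_le hU)
    _ ≤ (orderedFactorizationsLE N).ncard * (N : ℝ) ^ α :=
        ncard_coatomTuples_le hα (fun k => (hmax k).2) N
    _ ≤ (x * (x + 1) / 2) * x ^ α := by
        gcongr
        nlinarith [(Nat.cast_nonneg N : (0 : ℝ) ≤ N)]
    _ = (x * (x + 1) / 2) * (n : ℝ) ^ (η * α) := by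
        rw [Real.rpow_mul (Nat.cast_nonneg n)]

/-- Suppose `G` has polynomial maximal subgroup growth with exponent `α`
(the maximal subgroups of index `k` form a finite set of size at most `k^α`),
and suppose every subgroup of index `n` which is an intersection of maximal
subgroups can be written as `M₁ ∩ ⋯ ∩ M_t` with `|G:M₁|⋯|G:M_t| ≤ n^η`.
Then the set of index-`n` subgroups of `G` that are intersections of maximal
subgroups is finite of size at most `(n^η(n^η+1)/2)·n^(ηα)`, for `n ≥ 2`. -/
theorem card_maximal_intersections_le
    (G : Type*) [Group G] (α η : ℝ) (hα : 0 ≤ α) (hη : 0 ≤ η)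
    (hmax : ∀ k : ℕ, {M : Subgroup G | IsCoatom M ∧ M.index = k}.Finite ∧
      ({M : Subgroup G | IsCoatom M ∧ M.index = k}.ncard : ℝ) ≤ (k : ℝ) ^ α)
    (n : ℕ) (hn : 2 ≤ n)
    (hint : ∀ H : Subgroup G, H.index = n → IsMaximalIntersection H →
      ∃ (t : ℕ) (M : Fin t → Subgroup G), (∀ i, IsCoatom (M i)) ∧
        H = ⨅ i, M i ∧ (∏ i, ((M i).index : ℝ)) ≤ (n : ℝ) ^ η) :
    {H : Subgroup G | H.index = n ∧ IsMaximalIntersection H}.Finite ∧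
      ({H : Subgroup G | H.index = n ∧ IsMaximalIntersection H}.ncard : ℝ) ≤
        ((n : ℝ) ^ η * ((n : ℝ) ^ η + 1) / 2) * (n : ℝ) ^ (η * α) :=
  card_maximal_intersections_le_general G α η hα hmax n hn hint
end

section
/- Let G = V^t ⋊ H be a finite group where V is a faithful irreducible H-module (H acting diagonally on V^t). A subgroup M of G is maximal and satisfies M·V^t = G if and only if M = W·H^v for some maximal H-submodule W of V^t and some v ∈ V^t (where H^v denotes the conjugate of H by v). -/
namespace PaperSDP

variable {V H : Type*} [AddCommGroup V] [Group H] [DistribMulAction H V] {t : ℕ}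

/-- The diagonal action of `H` on `V^t`, as a homomorphism into the
(multiplicatively written) automorphism group of `V^t`. -/
def phi (V : Type*) [AddCommGroup V] (H : Type*) [Group H] [DistribMulAction H V]
    (t : ℕ) : H →* MulAut (Multiplicative (Fin t → V)) where
  toFun h := AddEquiv.toMultiplicative (DistribMulAction.toAddAut H (Fin t → V) h)
  map_one' := by ext v; simp
  map_mul' h₁ h₂ := by ext v; simp [mul_smul]

/-- The semidirect product `G = V^t ⋊ H` with diagonal action. -/
abbrev SDP (V : Type*) [AddCommGroup V] (H : Type*) [Group H] [DistribMulAction H V]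
    (t : ℕ) : Type _ :=
  (Multiplicative (Fin t → V)) ⋊[phi V H t] H

/-- The copy of `V^t` inside `G`. -/
def VtG (V : Type*) [AddCommGroup V] (H : Type*) [Group H] [DistribMulAction H V]
    (t : ℕ) : Subgroup (SDP V H t) :=
  (SemidirectProduct.inl : Multiplicative (Fin t → V) →* SDP V H t).range

/-- The image in `G` of an additive subgroup `W` of `V^t`. -/
def subG (W : AddSubgroup (Fin t → V)) : Subgroup (SDP V H t) :=
  (AddSubgroup.toSubgroup W).map
    (SemidirectProduct.inl : Multiplicative (Fin t → V) →* SDP V H t)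

/-- The element of `G` corresponding to `v ∈ V^t`. -/
def elemG (v : Fin t → V) : SDP V H t :=
  SemidirectProduct.inl (Multiplicative.ofAdd v)

/-- The conjugate `K^v = v⁻¹ K v` of a subgroup `K ≤ G` by an element `v ∈ V^t`. -/
def conjG (K : Subgroup (SDP V H t)) (v : Fin t → V) : Subgroup (SDP V H t) :=
  K.map (MulAut.conj (elemG v)⁻¹).toMonoidHom

/-- The copy `H^v` of `H` in `G`, conjugated by `v ∈ V^t`. -/
def HG (V : Type*) [AddCommGroup V] (H : Type*) [Group H] [DistribMulAction H V]
    (t : ℕ) (v : Fin t → V) : Subgroup (SDP V H t) :=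
  conjG (SemidirectProduct.inr : H →* SDP V H t).range v

/-- `W` is an `H`-submodule of `V^t` (an `H`-invariant additive subgroup). -/
def IsHSub (H : Type*) [Group H] [DistribMulAction H V]
    (W : AddSubgroup (Fin t → V)) : Prop :=
  ∀ (h : H) (w : Fin t → V), w ∈ W → h • w ∈ W

/-- `W` is a maximal `H`-submodule of `V^t`. -/
def IsMaxHSub (H : Type*) [Group H] [DistribMulAction H V]
    (W : AddSubgroup (Fin t → V)) : Prop :=
  IsHSub H W ∧ W ≠ ⊤ ∧ ∀ W' : AddSubgroup (Fin t → V), IsHSub H W' → W < W' → W' = ⊤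

/-- The action of `H` on `V` is (faithful and) irreducible. -/
def IsIrreducible (H : Type*) [Group H] (V : Type*) [AddCommGroup V]
    [DistribMulAction H V] : Prop :=
  (⊥ : AddSubgroup V) ≠ ⊤ ∧
    ∀ W : AddSubgroup V, (∀ (h : H) (w : V), w ∈ W → h • w ∈ W) → W = ⊥ ∨ W = ⊤

/-- The action of `H` on `V` is faithful. -/
def IsFaithful (H : Type*) [Group H] (V : Type*) [AddCommGroup V]
    [DistribMulAction H V] : Prop :=
  ∀ h : H, (∀ v : V, h • v = v) → h = 1

/-- An `End_H(V)`-subspace of `V`: an additive subgroup stable under all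
`H`-equivariant additive endomorphisms of `V`. -/
def IsFSub (H : Type*) [Group H] (V : Type*) [AddCommGroup V] [DistribMulAction H V]
    (Z : AddSubgroup V) : Prop :=
  ∀ f : V →+ V, (∀ (h : H) (v : V), f (h • v) = h • f v) → ∀ z ∈ Z, f z ∈ Z

/-- The centralizer `C_{H*}(Z)` of a subset `Z ⊆ V` (embedded diagonally in `V^t`)
in the conjugate `H* = H^g` of `H`, inside `G`. -/
def CHstar (g : SDP V H t) (Z : AddSubgroup V) : Subgroup (SDP V H t) :=
  ((SemidirectProduct.inr : H →* SDP V H t).range.map (MulAut.conj g).toMonoidHom) ⊓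
    Subgroup.centralizer ((fun z : V => elemG (H := H) (fun _ : Fin t => z)) '' Z)

end PaperSDP

open PaperSDP

/-!
A supplement `M` of `V^t` meets `V^t` in an `H`-submodule `W`, and choosing preimages in `M` of
the elements of `H` gives a `1`-cocycle `H → V^t` modulo `W`; `M = W·H^v` says precisely that
this cocycle is the coboundary of `v`. Maximality of `M` makes `W` a maximal submodule, so
`V^t/W ≅ V` is faithful and irreducible. Then `H` has no nontrivial normal `p`-subgroup (it would
fix a nonzero vector), so the last nontrivial term `N` of the derived series of `H`, being abelian,
is a `p'`-group; it has no nonzero fixed points on `V^t/W`, and averaging the cocycle over `N`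
turns it into a coboundary. Conversely, subgroups containing `H^v` are exactly the `W·H^v`, which
makes `W·H^v` maximal when `W` is.
-/

namespace PaperSDP

open SemidirectProduct

section Cohomology

variable {H U : Type*} [Group H] [AddCommGroup U] [DistribMulAction H U]

def IsCocycleMod (W : AddSubgroup U) (γ : H → U) : Prop :=
  ∀ h k : H, γ h + h • γ k - γ (h * k) ∈ W

lemma IsCocycleMod.sub_coboundary {W : AddSubgroup U} {γ : H → U} (hγ : IsCocycleMod W γ)
    (v : U) : IsCocycleMod W fun h => γ h - (h • v - v) := fun h k => by
  convert hγ h k using 1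
  simp only [smul_sub, mul_smul]
  abel

lemma IsCocycleMod.exists_sub_coboundary_mem_subgroup {W : AddSubgroup U} {γ : H → U}
    (hγ : IsCocycleMod W γ) (N : Subgroup H) [Finite N] {c : ℕ}
    (hc : ∀ x : U, (Nat.card N * c) • x = x) :
    ∃ v : U, ∀ m ∈ N, γ m - (m • v - v) ∈ W := by
  classical
  have : Fintype N := Fintype.ofFinite N
  set s := ∑ m : N, γ m
  have hsum : ∀ m ∈ N, Nat.card N • γ m + m • s - s ∈ W := fun m hm => by
    have hshift : ∑ k : N, γ (m * k) = s :=
      (Equiv.sum_comp (Equiv.mulLeft (⟨m, hm⟩ : N)) (fun k : N => γ k)).trans rfl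
    convert W.sum_mem (t := (Finset.univ : Finset N)) fun k _ => hγ m k using 1
    rw [Finset.sum_sub_distrib, Finset.sum_add_distrib, hshift, ← Finset.smul_sum,
      Finset.sum_const, Finset.card_univ, Nat.card_eq_fintype_card]
  -- `c` inverts `|N|`, so `c • (|N| • γ m + m • s - s)` is `γ m` minus the coboundary of `-c • s`
  refine ⟨-(c • s), fun m hm => ?_⟩
  convert W.nsmul_mem (hsum m hm) c using 1
  rw [smul_sub, smul_add, smul_smul, mul_comm, hc, smul_comm c m s, smul_neg]
  abel

lemma IsCocycleMod.smul_sub_mem_of_forall_mem {W : AddSubgroup U}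
    (hW : ∀ (h : H) (w : U), w ∈ W → h • w ∈ W) {γ : H → U} (hγ : IsCocycleMod W γ)
    {N : Subgroup H} [N.Normal] (hN : ∀ m ∈ N, γ m ∈ W) (h : H) :
    ∀ n ∈ N, n • γ h - γ h ∈ W := fun n hn => by
  have hm : h⁻¹ * n * h ∈ N := by simpa using Subgroup.Normal.conj_mem ‹_› n hn h⁻¹
  have hmul : h * (h⁻¹ * n * h) = n * h := by group
  have e₁ := hγ n h
  have e₂ := hγ h (h⁻¹ * n * h)
  rw [hmul] at e₂
  convert W.add_mem (W.sub_mem (W.sub_mem e₁ (hN n hn)) e₂) (hW h _ (hN _ hm)) using 1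
  abel

lemma IsCocycleMod.exists_sub_coboundary_mem {W : AddSubgroup U}
    (hW : ∀ (h : H) (w : U), w ∈ W → h • w ∈ W) {γ : H → U} (hγ : IsCocycleMod W γ)
    (N : Subgroup H) [N.Normal] [Finite N] {c : ℕ} (hc : ∀ x : U, (Nat.card N * c) • x = x)
    (hfix : ∀ x : U, (∀ n ∈ N, n • x - x ∈ W) → x ∈ W) :
    ∃ v : U, ∀ h : H, γ h - (h • v - v) ∈ W := by
  obtain ⟨v, hv⟩ := hγ.exists_sub_coboundary_mem_subgroup N hc
  exact ⟨v, fun h => hfix _ ((hγ.sub_coboundary v).smul_sub_mem_of_forall_mem hW hv h)⟩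

end Cohomology

section Representation

variable {H V : Type*} [Group H] [AddCommGroup V] [DistribMulAction H V]

lemma eq_zero_of_forall_smul_eq (hfaith : IsFaithful H V) (hirr : IsIrreducible H V)
    {N : Subgroup H} [N.Normal] (hN : N ≠ ⊥) {z : V} (hz : ∀ n ∈ N, n • z = z) : z = 0 := by
  let Z : AddSubgroup V :=
    { carrier := {z | ∀ n ∈ N, n • z = z}
      zero_mem' := fun n _ => smul_zero n
      add_mem' := fun ha hb n hn => by rw [smul_add, ha n hn, hb n hn]
      neg_mem' := fun ha n hn => by rw [smul_neg, ha n hn] }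
  have hZ : ∀ (h : H) (z : V), z ∈ Z → h • z ∈ Z := fun h z hz n hn => by
    have hconj : h⁻¹ * n * h ∈ N := by simpa using Subgroup.Normal.conj_mem ‹_› n hn h⁻¹
    calc n • h • z = h • (h⁻¹ * n * h) • z := by simp only [smul_smul]; congr 1; group
      _ = h • z := by rw [hz _ hconj]
  rcases hirr.2 Z hZ with hbot | htop
  · simpa [hbot] using (show z ∈ Z from hz)
  · refine absurd ((Subgroup.eq_bot_iff_forall N).2 fun n hn => hfaith n fun w => ?_) hN
    exact (htop ▸ AddSubgroup.mem_top w : w ∈ Z) n hn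

lemma exists_ne_zero_of_isIrreducible (hirr : IsIrreducible H V) : ∃ v : V, v ≠ 0 := by
  by_contra! h
  exact hirr.1 ((AddSubgroup.eq_top_iff' _).2 fun v => by simp [h v])

lemma dvd_natCard_of_isIrreducible [Finite V] {p : ℕ} (hp : p.Prime) (helem : ∀ v : V, p • v = 0)
    (hirr : IsIrreducible H V) : p ∣ Nat.card V := by
  obtain ⟨v, hv⟩ := exists_ne_zero_of_isIrreducible hirr
  have : Fact p.Prime := ⟨hp⟩
  exact addOrderOf_eq_prime (helem v) hv ▸ addOrderOf_dvd_natCard v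

lemma eq_bot_of_isPGroup [Finite V] {p : ℕ} (hp : p.Prime)
    (helem : ∀ v : V, p • v = 0) (hfaith : IsFaithful H V) (hirr : IsIrreducible H V)
    {P : Subgroup H} [P.Normal] (hP : IsPGroup p P) : P = ⊥ := by
  by_contra hbot
  have : Fact p.Prime := ⟨hp⟩
  obtain ⟨z, hz, hz0⟩ := hP.exists_fixed_point_of_prime_dvd_card_of_fixed_point V
    (dvd_natCard_of_isIrreducible hp helem hirr) (a := 0) fun g => smul_zero _
  exact hz0 (eq_zero_of_forall_smul_eq hfaith hirr hbot fun n hn => hz ⟨n, hn⟩).symm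

end Representation

lemma exists_normal_isMulCommutative (G : Type*) [Group G] [Group.IsSolvable G] [Nontrivial G] :
    ∃ A : Subgroup G, A.Normal ∧ A ≠ ⊥ ∧ IsMulCommutative A := by
  classical
  have hex : ∃ n, derivedSeries G (n + 1) = ⊥ := by
    obtain ⟨n, hn⟩ := Group.IsSolvable.solvable (G := G)
    exact ⟨n, eq_bot_mono (derivedSeries_antitone (G := G) n.le_succ) hn⟩
  refine ⟨derivedSeries G (Nat.find hex), derivedSeries_normal G _, ?_, ?_⟩
  · cases h : Nat.find hex with
    | zero => simp
    | succ k => exact Nat.find_min hex (h ▸ k.lt_succ_self)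
  · rw [← Subgroup.commutator_self_eq_bot_iff, ← derivedSeries_succ]
    exact Nat.find_spec hex

lemma exists_normal_ne_bot_not_dvd_card {G : Type*} [Group G] [Finite G] [Group.IsSolvable G]
    [Nontrivial G] {p : ℕ} [Fact p.Prime]
    (hOp : ∀ P : Subgroup G, P.Normal → IsPGroup p P → P = ⊥) :
    ∃ N : Subgroup G, N.Normal ∧ N ≠ ⊥ ∧ ¬ p ∣ Nat.card N := by
  obtain ⟨A, hA, hAbot, hAcomm⟩ := exists_normal_isMulCommutative G
  refine ⟨A, hA, hAbot, fun hdvd => ?_⟩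
  obtain ⟨S⟩ : Nonempty (Sylow p A) := inferInstance
  have := S.characteristic_of_normal (Subgroup.normal_of_isMulCommutative _)
  have hS := hOp _ inferInstance (S.isPGroup'.map A.subtype)
  exact S.ne_bot_of_dvd_card hdvd
    ((Subgroup.map_eq_bot_iff_of_injective _ A.subtype_injective).1 hS)

section Diagonal

variable {V H : Type*} [AddCommGroup V] [Group H] [DistribMulAction H V] {t : ℕ}

lemma IsHSub.sup {W W' : AddSubgroup (Fin t → V)} (hW : IsHSub H W) (hW' : IsHSub H W') :
    IsHSub H (W ⊔ W') := fun h x hx => by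
  obtain ⟨w, hw, w', hw', rfl⟩ := AddSubgroup.mem_sup.1 hx
  exact smul_add h w w' ▸ AddSubgroup.add_mem_sup (hW h w hw) (hW' h w' hw')

lemma exists_single_mem_eq_zero (hirr : IsIrreducible H V) {W : AddSubgroup (Fin t → V)}
    (hW : IsMaxHSub H W) : ∃ i, ∀ z : V, Pi.single i z ∈ W → z = 0 := by
  by_contra! hall
  refine hW.2.1 ((AddSubgroup.eq_top_iff' W).2 fun x => ?_)
  rw [← Finset.univ_sum_single x]
  refine W.sum_mem fun i _ => ?_
  let Z := W.comap (AddMonoidHom.single (fun _ => V) i)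
  have hZ : ∀ (h : H) (z : V), z ∈ Z → h • z ∈ Z := fun h z hz => by
    simpa [Z, Pi.single_smul'] using hW.1 h _ hz
  obtain ⟨z, hz, hz0⟩ := hall i
  rcases hirr.2 Z hZ with hbot | htop
  · exact absurd ((AddSubgroup.mem_bot).1 (hbot ▸ (hz : z ∈ Z))) hz0
  · exact (htop ▸ AddSubgroup.mem_top (x i) : x i ∈ Z)

lemma mem_of_forall_smul_sub_mem (hfaith : IsFaithful H V) (hirr : IsIrreducible H V)
    {W : AddSubgroup (Fin t → V)} (hW : IsMaxHSub H W) {N : Subgroup H} [N.Normal]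
    (hN : N ≠ ⊥) {x : Fin t → V} (hx : ∀ n ∈ N, n • x - x ∈ W) : x ∈ W := by
  obtain ⟨i, hi⟩ := exists_single_mem_eq_zero hirr hW
  let Vi := (AddMonoidHom.single (fun _ => V) i).range
  have hVi : IsHSub H Vi := by
    rintro h _ ⟨z, rfl⟩
    exact ⟨h • z, Pi.single_smul' i h z⟩
  obtain ⟨z₀, hz₀⟩ := exists_ne_zero_of_isIrreducible hirr
  have hsup : W ⊔ Vi = ⊤ := hW.2.2 _ (hW.1.sup hVi) <|
    lt_of_le_of_ne le_sup_left fun he =>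
      hz₀ (hi z₀ (he ▸ AddSubgroup.mem_sup_right ⟨z₀, rfl⟩))
  obtain ⟨w, hw, _, ⟨z, rfl⟩, rfl⟩ := AddSubgroup.mem_sup.1 (hsup ▸ AddSubgroup.mem_top x)
  have hfix : ∀ n ∈ N, n • z = z := fun n hn => by
    refine sub_eq_zero.1 (hi _ ?_)
    convert W.sub_mem (hx n hn) (W.sub_mem (hW.1 n w hw) hw) using 1
    simp only [AddMonoidHom.single_apply, Pi.single_sub, Pi.single_smul', smul_add]
    abel
  simpa [eq_zero_of_forall_smul_eq hfaith hirr hN hfix] using hw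

lemma IsMaxHSub.exists_sub_coboundary_mem [Finite V] [Finite H] [Group.IsSolvable H] {p : ℕ}
    (hp : p.Prime) (helem : ∀ v : V, p • v = 0) (hfaith : IsFaithful H V)
    (hirr : IsIrreducible H V) {W : AddSubgroup (Fin t → V)} (hW : IsMaxHSub H W)
    {γ : H → Fin t → V} (hγ : IsCocycleMod W γ) : ∃ v, ∀ h, γ h - (h • v - v) ∈ W := by
  rcases subsingleton_or_nontrivial H with hH | hH
  · exact ⟨0, fun h => by simpa [Subsingleton.elim h 1] using hγ 1 1⟩
  have : Fact p.Prime := ⟨hp⟩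
  obtain ⟨N, hN, hNbot, hNp⟩ := exists_normal_ne_bot_not_dvd_card (p := p)
    fun P _ hP => eq_bot_of_isPGroup hp helem hfaith hirr hP
  obtain ⟨c, -, hc⟩ :=
    Nat.exists_mul_mod_eq_one_of_coprime (hp.coprime_iff_not_dvd.2 hNp).symm hp.one_lt
  have hpx : ∀ x : Fin t → V, p • x = 0 := fun x => funext fun i => helem (x i)
  refine hγ.exists_sub_coboundary_mem hW.1 N (c := c) (fun x => ?_)
    fun x hx => mem_of_forall_smul_sub_mem hfaith hirr hW hNbot hx
  rw [← Nat.div_add_mod (Nat.card N * c) p, hc, add_smul, mul_smul, hpx, zero_add, one_smul]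

def mkG (a : Fin t → V) (h : H) : SDP V H t := ⟨Multiplicative.ofAdd a, h⟩

@[simp] lemma mkG_mul (a b : Fin t → V) (h k : H) :
    mkG a h * mkG b k = mkG (a + h • b) (h * k) := rfl

@[simp] lemma mkG_inv (a : Fin t → V) (h : H) : (mkG a h)⁻¹ = mkG (-(h⁻¹ • a)) h⁻¹ :=
  SemidirectProduct.ext (congrArg Multiplicative.ofAdd (smul_neg h⁻¹ a)) rfl

@[simp] lemma mkG_left_right (g : SDP V H t) : mkG g.left.toAdd g.right = g := rfl

lemma exists_mkG_eq (g : SDP V H t) : ∃ a h, mkG a h = g := ⟨_, _, mkG_left_right g⟩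

@[simp] lemma mkG_inj {a b : Fin t → V} {h k : H} : mkG a h = mkG b k ↔ a = b ∧ h = k := by
  simp [mkG, SemidirectProduct.ext_iff]

lemma mkG_mul_inv_mkG (a b : Fin t → V) (h : H) : mkG a h * (mkG b h)⁻¹ = mkG (a - b) 1 := by
  simp [sub_eq_add_neg]

lemma mkG_conj (a b : Fin t → V) (h : H) :
    mkG b h * mkG a 1 * (mkG b h)⁻¹ = mkG (h • a) 1 := by
  simp

lemma mkG_eq_mkG_sub_mul (a b : Fin t → V) (h : H) : mkG a h = mkG (a - b) 1 * mkG b h := by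
  simp

lemma mkG_mem_VtG {a : Fin t → V} {h : H} : mkG a h ∈ VtG V H t ↔ h = 1 := by
  refine ⟨?_, ?_⟩
  · rintro ⟨b, hb⟩
    exact (congrArg SemidirectProduct.right hb).symm
  · rintro rfl
    exact ⟨Multiplicative.ofAdd a, rfl⟩

lemma mkG_mem_subG {W : AddSubgroup (Fin t → V)} {a : Fin t → V} {h : H} :
    mkG a h ∈ subG W ↔ h = 1 ∧ a ∈ W := by
  refine ⟨?_, ?_⟩
  · rintro ⟨b, hb, he⟩
    have hleft : Multiplicative.toAdd b = a := congrArg (fun g : SDP V H t => g.left.toAdd) he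
    exact ⟨(congrArg SemidirectProduct.right he).symm, hleft ▸ hb⟩
  · rintro ⟨rfl, ha⟩
    exact ⟨Multiplicative.ofAdd a, ha, rfl⟩

lemma mkG_mem_HG {v a : Fin t → V} {h : H} : mkG a h ∈ HG V H t v ↔ a = h • v - v := by
  have hconj : ∀ k : H, MulAut.conj (elemG v)⁻¹ (inr k) = mkG (k • v - v) k := fun k => by
    change (mkG v 1)⁻¹ * mkG 0 k * (mkG v 1)⁻¹⁻¹ = _
    simp [sub_eq_add_neg, add_comm]
  refine ⟨?_, ?_⟩
  · rintro ⟨_, ⟨k, rfl⟩, he⟩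
    obtain ⟨rfl, rfl⟩ := mkG_inj.1 ((hconj k).symm.trans he)
    rfl
  · rintro rfl
    exact ⟨inr h, ⟨h, rfl⟩, hconj h⟩

def comapInl (K : Subgroup (SDP V H t)) : AddSubgroup (Fin t → V) :=
  Subgroup.toAddSubgroup' (K.comap inl)

lemma mem_comapInl {K : Subgroup (SDP V H t)} {a : Fin t → V} :
    a ∈ comapInl K ↔ mkG a 1 ∈ K := Iff.rfl

@[simp] lemma comapInl_top : comapInl (⊤ : Subgroup (SDP V H t)) = ⊤ :=
  (AddSubgroup.eq_top_iff' _).2 fun _ => mem_comapInl.2 (Subgroup.mem_top _)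

lemma comapInl_mono {K L : Subgroup (SDP V H t)} (hKL : K ≤ L) : comapInl K ≤ comapInl L :=
  fun _ ha => hKL ha

lemma comapInl_subG (W : AddSubgroup (Fin t → V)) : comapInl (subG (H := H) W) = W := by
  ext a
  simp [mem_comapInl, mkG_mem_subG]

lemma comapInl_HG (v : Fin t → V) : comapInl (HG V H t v) = ⊥ := by
  ext a
  simp [mem_comapInl, mkG_mem_HG]

lemma subG_comapInl_le (K : Subgroup (SDP V H t)) : subG (comapInl K) ≤ K := by
  rintro _ ⟨a, ha, rfl⟩
  exact ha

lemma subG_normal {W : AddSubgroup (Fin t → V)} (hW : IsHSub H W) : (subG (H := H) W).Normal := by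
  refine ⟨fun g hg x => ?_⟩
  obtain ⟨a, h, rfl⟩ := exists_mkG_eq g
  obtain ⟨b, k, rfl⟩ := exists_mkG_eq x
  obtain ⟨rfl, ha⟩ := mkG_mem_subG.1 hg
  rw [mkG_conj, mkG_mem_subG]
  exact ⟨rfl, hW _ _ ha⟩

lemma comapInl_sup_subG (K : Subgroup (SDP V H t)) {W : AddSubgroup (Fin t → V)}
    (hW : IsHSub H W) : comapInl (K ⊔ subG W) = comapInl K ⊔ W := by
  have := subG_normal hW
  refine le_antisymm (fun a ha => ?_) (sup_le (comapInl_mono le_sup_left)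
    ((comapInl_subG W).ge.trans (comapInl_mono le_sup_right)))
  obtain ⟨k, hk, _, ⟨b, hb, rfl⟩, hkb⟩ := Subgroup.mem_sup_of_normal_right.1 (mem_comapInl.1 ha)
  have hk' : k = mkG (a - b.toAdd) 1 := by
    rw [eq_mul_inv_of_mul_eq hkb]
    exact mkG_mul_inv_mkG a b.toAdd 1
  have hbW : b.toAdd ∈ W := hb
  convert AddSubgroup.add_mem_sup (mem_comapInl.2 (hk' ▸ hk)) hbW using 1
  exact (sub_add_cancel a b.toAdd).symm

lemma eq_subG_comapInl_sup_HG {K : Subgroup (SDP V H t)} {v : Fin t → V}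
    (hK : HG V H t v ≤ K) : K = subG (comapInl K) ⊔ HG V H t v := by
  refine le_antisymm (fun g hg => ?_) (sup_le (subG_comapInl_le K) hK)
  obtain ⟨a, h, rfl⟩ := exists_mkG_eq g
  have hv : mkG (h • v - v) h ∈ HG V H t v := mkG_mem_HG.2 rfl
  rw [mkG_eq_mkG_sub_mul a (h • v - v)]
  refine Subgroup.mul_mem_sup (mkG_mem_subG.2 ⟨rfl, mem_comapInl.2 ?_⟩) hv
  simpa only [mkG_mul_inv_mkG] using K.mul_mem hg (K.inv_mem (hK hv))

lemma sup_VtG_eq_top_iff {K : Subgroup (SDP V H t)} :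
    K ⊔ VtG V H t = ⊤ ↔ ∀ h : H, ∃ a, mkG a h ∈ K := by
  refine ⟨fun hK h => ?_, fun hK => eq_top_iff.2 fun g _ => ?_⟩
  · have hVt : (VtG V H t).map rightHom = ⊥ := by
      rw [VtG, ← MonoidHom.range_comp, rightHom_comp_inl, MonoidHom.range_one]
    have hmap : K.map rightHom = ⊤ := by
      rw [← sup_bot_eq (K.map rightHom), ← hVt, ← Subgroup.map_sup, hK, ← MonoidHom.range_eq_map,
        MonoidHom.range_eq_top_of_surjective _ rightHom_surjective]
    obtain ⟨g, hg, rfl⟩ := hmap ▸ Subgroup.mem_top h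
    exact ⟨g.left.toAdd, hg⟩
  · obtain ⟨a', h, rfl⟩ := exists_mkG_eq g
    obtain ⟨a, ha⟩ := hK h
    have hdecomp : mkG a' h = mkG a h * mkG (h⁻¹ • (a' - a)) 1 := by simp
    exact hdecomp ▸ Subgroup.mul_mem_sup ha (mkG_mem_VtG.2 rfl)

lemma isHSub_comapInl {K : Subgroup (SDP V H t)} (hK : ∀ h : H, ∃ a, mkG a h ∈ K) :
    IsHSub H (comapInl K) := fun h a ha => by
  obtain ⟨b, hb⟩ := hK h
  rw [mem_comapInl] at ha ⊢
  simpa only [mkG_conj] using K.mul_mem (K.mul_mem hb ha) (K.inv_mem hb)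

lemma isCocycleMod_comapInl {K : Subgroup (SDP V H t)} {γ : H → Fin t → V}
    (hγ : ∀ h, mkG (γ h) h ∈ K) : IsCocycleMod (comapInl K) γ := fun h k => by
  rw [mem_comapInl]
  simpa only [mkG_mul, mkG_mul_inv_mkG] using
    K.mul_mem (K.mul_mem (hγ h) (hγ k)) (K.inv_mem (hγ (h * k)))

lemma eq_top_of_comapInl_eq_top {K : Subgroup (SDP V H t)} (hK : ∀ h : H, ∃ a, mkG a h ∈ K)
    (htop : comapInl K = ⊤) : K = ⊤ := by
  refine eq_top_iff.2 fun g _ => ?_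
  obtain ⟨a, h, rfl⟩ := exists_mkG_eq g
  obtain ⟨b, hb⟩ := hK h
  rw [mkG_eq_mkG_sub_mul a b]
  exact K.mul_mem (mem_comapInl.1 (htop ▸ AddSubgroup.mem_top _)) hb

lemma HG_le_of_sub_coboundary_mem {K : Subgroup (SDP V H t)} {γ : H → Fin t → V}
    (hγ : ∀ h, mkG (γ h) h ∈ K) {v : Fin t → V} (hv : ∀ h, γ h - (h • v - v) ∈ comapInl K) :
    HG V H t v ≤ K := fun g hg => by
  obtain ⟨a, h, rfl⟩ := exists_mkG_eq g
  rw [mkG_mem_HG.1 hg, mkG_eq_mkG_sub_mul _ (γ h)]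
  refine K.mul_mem ?_ (hγ h)
  simpa using K.inv_mem (mem_comapInl.1 (hv h))

lemma isMaxHSub_comapInl {M : Subgroup (SDP V H t)} (hM : IsCoatom M)
    (hsurj : ∀ h : H, ∃ a, mkG a h ∈ M) : IsMaxHSub H (comapInl M) := by
  refine ⟨isHSub_comapInl hsurj, fun htop => hM.1 (eq_top_of_comapInl_eq_top hsurj htop),
    fun W hW hlt => ?_⟩
  have hMW : M < M ⊔ subG W := by
    refine lt_of_le_of_ne le_sup_left fun he => hlt.ne ?_
    rw [he, comapInl_sup_subG M hW, sup_eq_right.2 hlt.le]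
  rw [← sup_eq_right.2 hlt.le, ← comapInl_sup_subG M hW, hM.2 _ hMW, comapInl_top]

lemma isCoatom_subG_sup_HG {W : AddSubgroup (Fin t → V)} (hW : IsMaxHSub H W) (v : Fin t → V) :
    IsCoatom (subG W ⊔ HG V H t v) := by
  have hcomap : comapInl (subG W ⊔ HG V H t v) = W := by
    rw [sup_comm, comapInl_sup_subG _ hW.1, comapInl_HG, bot_sup_eq]
  refine ⟨fun htop => hW.2.1 (by rw [← hcomap, htop, comapInl_top]), fun K hK => ?_⟩
  have hsurj : ∀ h : H, ∃ a, mkG a h ∈ K := fun h =>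
    ⟨h • v - v, hK.le (Subgroup.mem_sup_right (mkG_mem_HG.2 rfl))⟩
  refine eq_top_of_comapInl_eq_top hsurj (hW.2.2 _ (isHSub_comapInl hsurj) ?_)
  refine hcomap ▸ lt_of_le_of_ne (comapInl_mono hK.le) fun he => hK.ne ?_
  rw [eq_subG_comapInl_sup_HG (le_sup_right.trans hK.le), ← he, hcomap]

end Diagonal

end PaperSDP

/-- Let `G = V^t ⋊ H` be a finite solvable group, where `V` is a faithful
irreducible module for `H` over the prime field `𝔽_p`, and `H` acts diagonally
on `V^t`.  A subgroup `M` of `G` is maximal and satisfies `M·V^t = G` if and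
only if `M = W·H^v` for some maximal `H`-submodule `W` of `V^t` and some
`v ∈ V^t`. -/
theorem maximal_supplement_iff
    (p : ℕ) (hp : p.Prime) (V H : Type*) [AddCommGroup V] [Group H]
    [DistribMulAction H V] [Finite V] [Finite H] [Group.IsSolvable H]
    (helem : ∀ v : V, p • v = 0)
    (hfaith : IsFaithful H V) (hirr : IsIrreducible H V)
    (t : ℕ) (M : Subgroup (SDP V H t)) :
    (IsCoatom M ∧ M ⊔ VtG V H t = ⊤) ↔
      ∃ (W : AddSubgroup (Fin t → V)) (v : Fin t → V),
        IsMaxHSub H W ∧ M = subG W ⊔ HG V H t v := by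
  constructor
  · rintro ⟨hM, hsup⟩
    have hsurj := sup_VtG_eq_top_iff.1 hsup
    have hW := isMaxHSub_comapInl hM hsurj
    choose γ hγ using hsurj
    obtain ⟨v, hv⟩ := hW.exists_sub_coboundary_mem hp helem hfaith hirr (isCocycleMod_comapInl hγ)
    exact ⟨comapInl M, v, hW, eq_subG_comapInl_sup_HG (HG_le_of_sub_coboundary_mem hγ hv)⟩
  · rintro ⟨W, v, hW, rfl⟩
    refine ⟨isCoatom_subG_sup_HG hW v, sup_VtG_eq_top_iff.2 fun h => ⟨h • v - v, ?_⟩⟩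
    exact Subgroup.mem_sup_right (mkG_mem_HG.2 rfl)
end

section
/- Let G be a finite solvable group with nilpotent derived subgroup. If V is an irreducible G-module that is G-isomorphic to a non-Frattini (complemented) chief factor of G, then dim_{End_G(V)} V = 1. -/
namespace PaperCF

variable {G : Type*} [Group G]

/-- The image `A = X/Y` of `X` in the quotient `G/Y`. -/
def factor (Y X : Subgroup G) [Y.Normal] : Subgroup (G ⧸ Y) :=
  X.map (QuotientGroup.mk' Y)

/-- `f` is a `G`-endomorphism of the factor `X/Y ≤ G/Y`: it maps `X/Y` to
itself, is additive on `X/Y`, and commutes with the conjugation action of `G`. -/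
def IsGEnd (Y X : Subgroup G) [Y.Normal] (f : G ⧸ Y → G ⧸ Y) : Prop :=
  (∀ a ∈ factor Y X, f a ∈ factor Y X) ∧
  (∀ a b, a ∈ factor Y X → b ∈ factor Y X → f (a * b) = f a * f b) ∧
  (∀ q : G ⧸ Y, ∀ a ∈ factor Y X, f (q * a * q⁻¹) = q * f a * q⁻¹)

/-- An `F`-subspace of the chief factor `X/Y`, where `F = End_G(X/Y)`:
a subgroup of `X/Y` stable under all `G`-endomorphisms of `X/Y`. -/
def IsFSub (Y X : Subgroup G) [Y.Normal] (W : Subgroup (G ⧸ Y)) : Prop :=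
  ∀ f : G ⧸ Y → G ⧸ Y, IsGEnd Y X f → ∀ w ∈ W, f w ∈ W

/-- `W` is spanned over `F = End_G(X/Y)` by `γ` elements (i.e. `dim_F W ≤ γ`). -/
def SpannedBy (Y X : Subgroup G) [Y.Normal] (γ : ℕ) (W : Subgroup (G ⧸ Y)) : Prop :=
  ∃ z : Fin γ → G ⧸ Y, (∀ i, z i ∈ factor Y X) ∧
    W = sInf {W' : Subgroup (G ⧸ Y) |
      W' ≤ factor Y X ∧ IsFSub Y X W' ∧ ∀ i, z i ∈ W'}

/-- The centralizer `C_G(W)` in `G` of a subset `W` of `G/Y`. -/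
def CG (Y : Subgroup G) [Y.Normal] (W : Subgroup (G ⧸ Y)) : Subgroup G :=
  (Subgroup.centralizer (W : Set (G ⧸ Y))).comap (QuotientGroup.mk' Y)

/-- The chief factor `X/Y` of `G` is a `γ`-module: for every `F`-subspace `W`
of `X/Y` (`F = End_G(X/Y)`) there exists an `F`-subspace `W*` with
`dim_F W* ≤ γ` and `C_G(W) = C_G(W*) ∩ ⋂_{M ∈ 𝓜_W} M`, where `𝓜_W` is the set
of maximal subgroups of `G` containing `C_G(W)`. -/
def IsGammaModule (Y X : Subgroup G) [Y.Normal] (γ : ℕ) : Prop :=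
  ∀ W : Subgroup (G ⧸ Y), W ≤ factor Y X → IsFSub Y X W →
    ∃ Wstar : Subgroup (G ⧸ Y), Wstar ≤ factor Y X ∧ IsFSub Y X Wstar ∧
      SpannedBy Y X γ Wstar ∧
      CG Y W = CG Y Wstar ⊓ ⨅ M ∈ {M : Subgroup G | IsCoatom M ∧ CG Y W ≤ M}, M

/-- `X/Y` is a chief factor of `G`. -/
def IsChiefFactor (Y X : Subgroup G) : Prop :=
  Y.Normal ∧ X.Normal ∧ Y < X ∧
    ∀ N : Subgroup G, N.Normal → Y ≤ N → N ≤ X → N = Y ∨ N = X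

/-- The chief factor `X/Y` is complemented (non-Frattini). -/
def IsComplemented' (Y X : Subgroup G) : Prop :=
  ∃ K : Subgroup G, K ⊔ X = ⊤ ∧ K ⊓ X = Y

end PaperCF

open PaperCF
open scoped commutatorElement

/-!
Let `N = (G/Y)'`, which is nilpotent. The commutator `⁅N, X/Y⁆` is normal in `G/Y` and lies in
the chief factor `X/Y`, so it is trivial or all of `X/Y`; in the latter case `X/Y ≤ N` and
`X/Y = ⁅N, X/Y⁆` would sink down the lower central series of `N`. Hence `N` centralizes `X/Y`,
so `G` acts on `X/Y` through an abelian group and every conjugation is itself a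
`G`-endomorphism. An `End_G(X/Y)`-subspace is therefore normal in `G/Y`, and minimality of the
chief factor forces it to be `1` or `X/Y`.
-/

namespace Subgroup

variable {G : Type*} [Group G]

theorem eq_bot_of_le_commutator_top [Group.IsNilpotent G] {K : Subgroup G} (hK : K ≤ ⁅K, ⊤⁆) :
    K = ⊥ := by
  obtain ⟨n, hn⟩ := nilpotent_iff_lowerCentralSeries.mp ‹_›
  have hle : ∀ m, K ≤ (⊤ : Subgroup G).lowerCentralSeries m := by
    intro m
    induction m with
    | zero => exact le_top
    | succ m ih => exact hK.trans (commutator_mono ih le_rfl)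
  exact le_bot_iff.mp (hn ▸ hle n)

theorem eq_bot_of_commutator_eq_self {N K : Subgroup G} [N.Normal] [Group.IsNilpotent N]
    (h : ⁅N, K⁆ = K) : K = ⊥ := by
  have hKN : K ≤ N := h ▸ commutator_le_left N K
  have hmap : (K.subgroupOf N).map N.subtype = K := by
    rw [subgroupOf_map_subtype, inf_eq_left.mpr hKN]
  have hK : K.subgroupOf N ≤ ⁅K.subgroupOf N, ⊤⁆ := by
    rw [← map_le_map_iff_of_injective N.subtype_injective, map_commutator, hmap,
      ← MonoidHom.range_eq_map, range_subtype, commutator_comm, h]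
  rw [← hmap, eq_bot_of_le_commutator_top hK, map_bot]

theorem conj_conj_comm_of_commutator_eq_bot {A : Subgroup G}
    (hA : ⁅_root_.commutator G, A⁆ = ⊥) (q q' : G) {b : G} (hb : b ∈ A) :
    q * (q' * b * q'⁻¹) * q⁻¹ = q' * (q * b * q⁻¹) * q'⁻¹ := by
  have hc : ⁅q⁻¹, q'⁻¹⁆ * b = b * ⁅q⁻¹, q'⁻¹⁆ :=
    commutator_eq_bot_iff_le_centralizer.mp hA
      (commutator_mem_commutator (mem_top _) (mem_top _)) b hb |>.symm
  -- `q * q' = q' * q * ⁅q⁻¹, q'⁻¹⁆`, and the commutator commutes with `b`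
  calc q * (q' * b * q'⁻¹) * q⁻¹
      = q' * q * (⁅q⁻¹, q'⁻¹⁆ * b) * ⁅q⁻¹, q'⁻¹⁆⁻¹ * q⁻¹ * q'⁻¹ := by
        simp only [commutatorElement_def]; group
    _ = q' * (q * b * q⁻¹) * q'⁻¹ := by
        rw [hc]; simp only [commutatorElement_def]; group

end Subgroup

namespace PaperCF

variable {G : Type*} [Group G] {Y X : Subgroup G} [Y.Normal]

theorem normal_factor (hX : X.Normal) : (factor Y X).Normal :=
  hX.map _ (QuotientGroup.mk'_surjective Y)

theorem IsChiefFactor.eq_bot_or_eq_factor (hchief : IsChiefFactor Y X)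
    {P : Subgroup (G ⧸ Y)} [P.Normal] (hP : P ≤ factor Y X) : P = ⊥ ∨ P = factor Y X := by
  obtain ⟨-, -, hYX, hmin⟩ := hchief
  set π := QuotientGroup.mk' Y
  have hker : π.ker = Y := QuotientGroup.ker_mk' Y
  have hPmap : (P.comap π).map π = P :=
    Subgroup.map_comap_eq_self_of_surjective (QuotientGroup.mk'_surjective Y) P
  have hYP : Y ≤ P.comap π := hker.ge.trans (Subgroup.ker_le_comap π P)
  have hPX : P.comap π ≤ X := by
    have := Subgroup.comap_mono (f := π) hP
    rwa [factor, Subgroup.comap_map_eq, hker, sup_eq_left.mpr hYX.le] at this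
  rcases hmin (P.comap π) inferInstance hYP hPX with h | h
  · left
    rw [← hPmap, h, Subgroup.map_eq_bot_iff, hker]
  · right
    rw [← hPmap, h, factor]

theorem IsChiefFactor.commutator_factor_eq_bot (hnil : Group.IsNilpotent (commutator G))
    (hchief : IsChiefFactor Y X) : ⁅commutator (G ⧸ Y), factor Y X⁆ = ⊥ := by
  have := normal_factor (Y := Y) hchief.2.1
  have hmap : (commutator G).map (QuotientGroup.mk' Y) = commutator (G ⧸ Y) := by
    rw [commutator_def, commutator_def, Subgroup.map_commutator,
      Subgroup.map_top_of_surjective _ (QuotientGroup.mk'_surjective Y)]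
  have : Group.IsNilpotent (commutator (G ⧸ Y)) :=
    hmap ▸ Group.nilpotent_of_surjective _ ((QuotientGroup.mk' Y).subgroupMap_surjective _)
  rcases hchief.eq_bot_or_eq_factor (Subgroup.commutator_le_right (commutator (G ⧸ Y)) _)
    with h | h
  · exact h
  · rw [h, Subgroup.eq_bot_of_commutator_eq_self h]

theorem isGEnd_conj (hX : X.Normal) (hcomm : ⁅commutator (G ⧸ Y), factor Y X⁆ = ⊥)
    (q : G ⧸ Y) : IsGEnd Y X (fun x => q * x * q⁻¹) :=
  ⟨fun _ hb => (normal_factor hX).conj_mem _ hb q, fun _ _ _ _ => by group,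
    fun q' _ hb => Subgroup.conj_conj_comm_of_commutator_eq_bot hcomm q q' hb⟩

theorem IsFSub.normal {W : Subgroup (G ⧸ Y)} (hW : IsFSub Y X W)
    (hconj : ∀ q, IsGEnd Y X (fun x => q * x * q⁻¹)) : W.Normal :=
  ⟨fun w hw q => hW _ (hconj q) w hw⟩

end PaperCF

theorem dim_one_of_nilpotent_derived_general
    (G : Type*) [Group G]
    (hnil : Group.IsNilpotent ↥(commutator G))
    (Y X : Subgroup G) [Y.Normal]
    (hchief : IsChiefFactor Y X) :
    ∀ a ∈ factor Y X, a ≠ 1 →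
      ∀ W : Subgroup (G ⧸ Y), W ≤ factor Y X → IsFSub Y X W → a ∈ W →
        W = factor Y X := by
  intro a _ ha W hWX hW haW
  have := hW.normal (isGEnd_conj hchief.2.1 (hchief.commutator_factor_eq_bot hnil))
  refine (hchief.eq_bot_or_eq_factor hWX).resolve_left ?_
  rintro rfl
  exact ha haW

/-- Let `G` be a finite solvable group with nilpotent derived subgroup.  If
`X/Y` is a complemented (non-Frattini) chief factor of `G`, viewed as an
irreducible `G`-module, then `dim_{End_G(X/Y)} (X/Y) = 1`: every
`End_G(X/Y)`-subspace of `X/Y` containing a nonzero vector is all of `X/Y`. -/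
theorem dim_one_of_nilpotent_derived
    (G : Type*) [Group G] [Finite G] [Group.IsSolvable G]
    (hnil : Group.IsNilpotent ↥(commutator G))
    (Y X : Subgroup G) [Y.Normal] [X.Normal]
    (hchief : IsChiefFactor Y X) (hcompl : IsComplemented' Y X) :
    ∀ a ∈ factor Y X, a ≠ 1 →
      ∀ W : Subgroup (G ⧸ Y), W ≤ factor Y X → IsFSub Y X W → a ∈ W →
        W = factor Y X :=
  dim_one_of_nilpotent_derived_general G hnil Y X hchief
end

section
/- Let G be a finite solvable group with trivial Frattini subgroup, and let C = R × D as in the crown decomposition (C/R a crown, D a nontrivial normal subgroup). If H ≤ G satisfies HD = HR = G, then H = G. -/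
namespace PaperCrown

variable {G : Type*} [Group G]

/-- The chief factors `X₁/Y₁` and `X₂/Y₂` of `G` are `G`-isomorphic. -/
def IsGIso (Y₁ X₁ Y₂ X₂ : Subgroup G) [Y₁.Normal] [Y₂.Normal] : Prop :=
  ∃ e : (X₁.map (QuotientGroup.mk' Y₁)) ≃* (X₂.map (QuotientGroup.mk' Y₂)),
    ∀ (g : G) (a : X₁.map (QuotientGroup.mk' Y₁))
      (h : (QuotientGroup.mk' Y₁ g) * (a : G ⧸ Y₁) * (QuotientGroup.mk' Y₁ g)⁻¹ ∈
        X₁.map (QuotientGroup.mk' Y₁)),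
      ((e ⟨_, h⟩ : X₂.map (QuotientGroup.mk' Y₂)) : G ⧸ Y₂) =
        (QuotientGroup.mk' Y₂ g) * ((e a : X₂.map (QuotientGroup.mk' Y₂)) : G ⧸ Y₂) *
          (QuotientGroup.mk' Y₂ g)⁻¹

/-- For a subgroup with core `Y`, the subgroup of `G` corresponding to the socle
of `G/Y`: the intersection of all normal subgroups properly containing `Y`. -/
def socAbove (Y : Subgroup G) : Subgroup G :=
  sInf {N : Subgroup G | N.Normal ∧ Y < N}

/-- `R_G(V)` for `V = X/Y`: the intersection of all maximal subgroups `M` of `G`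
whose socle chief factor `X_M/Y_M` is `G`-isomorphic to `X/Y`. -/
def crownR (Y X : Subgroup G) [Y.Normal] : Subgroup G :=
  sInf {M : Subgroup G |
    IsCoatom M ∧ IsGIso M.normalCore (socAbove M.normalCore) Y X}

/-- `C_G(X/Y)`: the centralizer in `G` of the chief factor `X/Y`. -/
def crownC (Y X : Subgroup G) [Y.Normal] : Subgroup G :=
  (Subgroup.centralizer ((X.map (QuotientGroup.mk' Y)) : Set (G ⧸ Y))).comap
    (QuotientGroup.mk' Y)

/-- `X/Y` is a chief factor of `G`. -/
def IsChiefFactor (Y X : Subgroup G) : Prop :=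
  Y.Normal ∧ X.Normal ∧ Y < X ∧
    ∀ N : Subgroup G, N.Normal → Y ≤ N → N ≤ X → N = Y ∨ N = X

/-- The chief factor `X/Y` is complemented. -/
def IsComplemented' (Y X : Subgroup G) : Prop :=
  ∃ K : Subgroup G, K ⊔ X = ⊤ ∧ K ⊓ X = Y

end PaperCrown

open PaperCrown
open scoped Pointwise commutatorElement

/-!
If `H < G`, take a maximal subgroup `M ≥ H`; then neither `D` nor `R` lies in `M`. Since `G` is
solvable, `G / core M` has a unique minimal normal subgroup `A / core M`, and it is
self-centralizing. As `D ⊄ M` we get `A ≤ core M ⊔ D`, so `A / core M` is `G`-isomorphic to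
`E / (E ⊓ core M)` with `E = A ⊓ D`, and, because `R ⊓ D = 1`, also to `(E ⊔ W) / W` for
`W = (E ⊓ core M) ⊔ R`. A normal subgroup `P ≤ E` minimal with `P ⊄ W` is not contained in `R`,
so it escapes some maximal subgroup `M'` of the family defining `R`. Its socle factor
`A' / core M'` is `G`-isomorphic to `X / Y`, so `A' = C_G(X / Y) ≥ D ≥ P`. Now
`(E ⊔ W) / W = (P ⊔ W) / W ≅ P / (P ⊓ W)`, and minimality of `P` gives `P ⊓ W = P ⊓ core M'`,
whence `P / (P ⊓ W) ≅ A' / core M'`. Hence `A / core M ≅ X / Y`, i.e. `M` belongs to that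
family, and `R ≤ M`: a contradiction.
-/

namespace Subgroup

variable {G : Type*} [Group G]

theorem inf_sup_eq_sup_inf_of_coe_sup_eq_mul {H K L : Subgroup G} (hKH : K ≤ H)
    (hKL : ((K ⊔ L : Subgroup G) : Set G) = K * L) : H ⊓ (K ⊔ L) = K ⊔ H ⊓ L := by
  refine le_antisymm ?_ (sup_le (le_inf hKH le_sup_left) (inf_le_inf_left H le_sup_right))
  rintro _ ⟨hH, hKL'⟩
  obtain ⟨k, hk, l, hl, rfl⟩ : _ ∈ (K : Set G) * L := hKL ▸ hKL'
  have hlH : l ∈ H := by simpa using H.mul_mem (H.inv_mem (hKH hk)) hH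
  exact mul_mem_sup hk ⟨hlH, hl⟩

theorem inf_sup_normal_eq_of_le {H K N : Subgroup G} [N.Normal] (hKH : K ≤ H) :
    H ⊓ (K ⊔ N) = K ⊔ H ⊓ N :=
  inf_sup_eq_sup_inf_of_coe_sup_eq_mul hKH (mul_normal K N)

theorem inf_normal_sup_eq_of_le {H K N : Subgroup G} [N.Normal] (hNH : N ≤ H) :
    H ⊓ (N ⊔ K) = N ⊔ H ⊓ K :=
  inf_sup_eq_sup_inf_of_coe_sup_eq_mul hNH (normal_mul N K)

theorem normalCore_comap_conj (H : Subgroup G) (g : G) :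
    (H.comap (MulAut.conj g : G →* G)).normalCore = H.normalCore := by
  have key : ∀ (N K : Subgroup G) [N.Normal] (g : G),
      N ≤ K.comap (MulAut.conj g : G →* G) ↔ N ≤ K := by
    intro N K _ g
    rw [← map_le_iff_le_comap]
    exact iff_of_eq (congrArg (· ≤ K) (Normal.map_conj_eq N g))
  refine le_antisymm ?_ ?_
  · rw [normal_le_normalCore, ← key _ _ g]
    exact normalCore_le _
  · rw [normal_le_normalCore, key]
    exact normalCore_le _

end Subgroup

theorem Group.IsSolvable.le_of_le_commutator_sup {G : Type*} [Group G] [Group.IsSolvable G]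
    {N A : Subgroup G} [N.Normal] (h : A ≤ ⁅A, A⁆ ⊔ N) : A ≤ N := by
  set A' := A.map (QuotientGroup.mk' N)
  have hA' : A' ≤ ⁅A', A'⁆ := by
    rw [← Subgroup.map_commutator]
    refine (Subgroup.map_mono h).trans_eq ?_
    rw [Subgroup.map_sup, QuotientGroup.map_mk'_self, sup_bot_eq]
  by_contra hAN
  have hne : A' ≠ ⊥ := by
    rwa [Ne, Subgroup.map_eq_bot_iff, QuotientGroup.ker_mk']
  exact (Group.IsSolvable.commutator_lt_of_ne_bot hne).not_ge hA'

namespace PaperCrown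

variable {G : Type*} [Group G]

theorem mem_crownC_iff {Y X : Subgroup G} [Y.Normal] {g : G} :
    g ∈ crownC Y X ↔ ∀ x ∈ X, ⁅g, x⁆ ∈ Y := by
  simp only [crownC, Subgroup.mem_comap, Subgroup.mem_centralizer_iff, SetLike.mem_coe,
    Subgroup.mem_map, forall_exists_index, and_imp, forall_apply_eq_imp_iff₂]
  refine forall₂_congr fun x _ => ?_
  rw [← map_mul, ← map_mul, QuotientGroup.mk'_apply, QuotientGroup.mk'_apply, QuotientGroup.eq,
    Subgroup.Normal.mem_comm_iff ‹_›, mul_inv_rev, commutatorElement_def, ← mul_assoc]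

theorem le_crownC_iff {Y X B : Subgroup G} [Y.Normal] : B ≤ crownC Y X ↔ ⁅B, X⁆ ≤ Y := by
  rw [Subgroup.commutator_le]
  exact forall₂_congr fun _ _ => mem_crownC_iff

namespace IsGIso

variable {Y₁ X₁ Y₂ X₂ : Subgroup G} [Y₁.Normal] [Y₂.Normal]

theorem symm [X₁.Normal] (h : IsGIso Y₁ X₁ Y₂ X₂) : IsGIso Y₂ X₂ Y₁ X₁ := by
  obtain ⟨e, he⟩ := h
  have : (X₁.map (QuotientGroup.mk' Y₁)).Normal := .map ‹_› _ (QuotientGroup.mk'_surjective Y₁)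
  refine ⟨e.symm, fun g b hb => ?_⟩
  have hmem := this.conj_mem _ (e.symm b).2 (QuotientGroup.mk' Y₁ g)
  have key : e ⟨_, hmem⟩ = ⟨_, hb⟩ := Subtype.ext (by rw [he, e.apply_symm_apply])
  rw [← key, e.symm_apply_apply]

theorem trans {Y₃ X₃ : Subgroup G} [Y₃.Normal] (h₁ : IsGIso Y₁ X₁ Y₂ X₂)
    (h₂ : IsGIso Y₂ X₂ Y₃ X₃) : IsGIso Y₁ X₁ Y₃ X₃ := by
  obtain ⟨e₁, he₁⟩ := h₁
  obtain ⟨e₂, he₂⟩ := h₂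
  refine ⟨e₁.trans e₂, fun g a h => ?_⟩
  have hconj := he₁ g a h
  have hmem := hconj ▸ (e₁ ⟨_, h⟩).2
  simp only [MulEquiv.trans_apply, show e₁ ⟨_, h⟩ = ⟨_, hmem⟩ from Subtype.ext hconj, he₂ g _ hmem]

theorem crownC_le (h : IsGIso Y₁ X₁ Y₂ X₂) : crownC Y₁ X₁ ≤ crownC Y₂ X₂ := by
  obtain ⟨e, he⟩ := h
  intro g hg
  simp only [crownC, Subgroup.mem_comap, Subgroup.mem_centralizer_iff] at hg ⊢
  intro b hb
  set a := e.symm ⟨b, hb⟩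
  have hfix : QuotientGroup.mk' Y₁ g * a * (QuotientGroup.mk' Y₁ g)⁻¹ = a := by
    rw [← hg _ a.2, mul_inv_cancel_right]
  have hb' : b = QuotientGroup.mk' Y₂ g * b * (QuotientGroup.mk' Y₂ g)⁻¹ := by
    simpa only [hfix, a, Subtype.coe_eta, MulEquiv.apply_symm_apply] using
      he g a (by rw [hfix]; exact a.2)
  conv_lhs => rw [hb']
  rw [inv_mul_cancel_right]

theorem crownC_eq [X₁.Normal] (h : IsGIso Y₁ X₁ Y₂ X₂) : crownC Y₁ X₁ = crownC Y₂ X₂ :=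
  le_antisymm h.crownC_le h.symm.crownC_le

end IsGIso

theorem isGIso_inf_sup (N E : Subgroup G) [N.Normal] [E.Normal] :
    IsGIso (N ⊓ E) E N (N ⊔ E) := by
  set S := E.map (QuotientGroup.mk' (N ⊓ E))
  let q : G ⧸ (N ⊓ E) →* G ⧸ N := QuotientGroup.map _ _ (MonoidHom.id G) fun _ h => h.1
  have hqS : S.map q = (N ⊔ E).map (QuotientGroup.mk' N) := by
    rw [Subgroup.map_map, Subgroup.map_sup, QuotientGroup.map_mk'_self, bot_sup_eq]
    rfl
  have hinj : Function.Injective (q.subgroupMap S) := by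
    rintro ⟨_, c, hc, rfl⟩ ⟨_, d, hd, rfl⟩ hcd
    have hcd : (c : G ⧸ N) = d := congrArg Subtype.val hcd
    rw [QuotientGroup.eq] at hcd
    exact Subtype.ext (QuotientGroup.eq.mpr ⟨hcd, E.mul_mem (E.inv_mem hc) hd⟩)
  refine ⟨(MulEquiv.ofBijective _ ⟨hinj, q.subgroupMap_surjective S⟩).trans
    (MulEquiv.subgroupCongr hqS), fun g a h => ?_⟩
  show q (_ * _ * _) = QuotientGroup.mk' N g * q a * (QuotientGroup.mk' N g)⁻¹
  rw [map_mul, map_mul, map_inv]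
  rfl

theorem isGIso_of_inf_eq_of_sup_eq {N E Y X : Subgroup G} [N.Normal] [E.Normal] [Y.Normal]
    (hY : N ⊓ E = Y) (hX : N ⊔ E = X) : IsGIso Y E N X := by
  subst hY hX
  exact isGIso_inf_sup N E

namespace IsChiefFactor

variable {N A : Subgroup G}

theorem commutator_le [Group.IsSolvable G] (hA : IsChiefFactor N A) : ⁅A, A⁆ ≤ N := by
  obtain ⟨_, _, hNA, hmin⟩ := hA
  rcases hmin (⁅A, A⁆ ⊔ N) inferInstance le_sup_right
      (sup_le (Subgroup.commutator_le_left A A) hNA.le) with h | h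
  · exact le_sup_left.trans h.le
  · exact absurd (Group.IsSolvable.le_of_le_commutator_sup h.ge) hNA.not_ge

theorem sup_eq_of_not_le (hA : IsChiefFactor N A) {Q : Subgroup G} [Q.Normal] (hQA : Q ≤ A)
    (hQN : ¬Q ≤ N) : Q ⊔ N = A := by
  obtain ⟨_, _, hNA, hmin⟩ := hA
  exact (hmin _ inferInstance le_sup_right (sup_le hQA hNA.le)).resolve_left
    fun h => hQN (le_sup_left.trans h.le)

theorem eq_sup_inf_of_not_le (hA : IsChiefFactor N A) {Q E : Subgroup G} [Q.Normal]
    (hQE : Q ≤ E) (hEA : E ≤ A) (hQN : ¬Q ≤ N) : E = Q ⊔ E ⊓ N := by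
  have := hA.1
  rw [← Subgroup.inf_sup_normal_eq_of_le hQE, hA.sup_eq_of_not_le (hQE.trans hEA) hQN,
    inf_eq_left.mpr hEA]

end IsChiefFactor

theorem exists_isChiefFactor_of_lt_top [Finite G] {N : Subgroup G} [N.Normal] (hN : N < ⊤) :
    ∃ A, IsChiefFactor N A := by
  obtain ⟨A, ⟨hA, hNA⟩, hmin⟩ :=
    exists_minimal_of_wellFoundedLT (fun A : Subgroup G => A.Normal ∧ N < A) ⟨⊤, inferInstance, hN⟩
  refine ⟨A, inferInstance, hA, hNA, fun B hB hNB hBA => ?_⟩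
  rcases hNB.eq_or_lt with h | h
  · exact .inl h.symm
  · exact .inr (hBA.antisymm (hmin ⟨hB, h⟩ hBA))

section Primitive

variable [Group.IsSolvable G] {M A : Subgroup G}

theorem crownC_eq_of_isCoatom (hM : IsCoatom M) (hA : IsChiefFactor M.normalCore A) :
    crownC M.normalCore A = A := by
  have := hA.2.1
  have hNA := hA.2.2.1
  have hAC : A ≤ crownC M.normalCore A := le_crownC_iff.mpr hA.commutator_le
  have hMA : M ⊔ A = ⊤ :=
    hM.2 _ (left_lt_sup.mpr fun h => hNA.not_ge (Subgroup.normal_le_normalCore.mpr h))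
  -- conjugating by `a ∈ A` moves an element of `crownC ⊓ M` only by a commutator in the core
  have hCM : crownC M.normalCore A ⊓ M ≤ M.normalCore := by
    rintro x ⟨hxC, hxM⟩ g
    obtain ⟨m, hm, a, ha, rfl⟩ : g ∈ (M : Set G) * A := by
      rw [← Subgroup.mul_normal, hMA]
      trivial
    have hax : ⁅a, x⁆ ∈ M := by
      rw [← commutatorElement_inv]
      exact Subgroup.normalCore_le M (inv_mem (mem_crownC_iff.mp hxC a ha))
    have e : m * a * x * (m * a)⁻¹ = m * (⁅a, x⁆ * x) * m⁻¹ := by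
      rw [commutatorElement_def]
      group
    rw [e]
    exact M.mul_mem (M.mul_mem hm (M.mul_mem hax hxM)) (M.inv_mem hm)
  refine le_antisymm ?_ hAC
  calc crownC M.normalCore A = crownC M.normalCore A ⊓ (A ⊔ M) := by
        rw [sup_comm, hMA, inf_top_eq]
    _ = A ⊔ crownC M.normalCore A ⊓ M := Subgroup.inf_normal_sup_eq_of_le hAC
    _ ≤ A := sup_le le_rfl (hCM.trans hNA.le)

theorem le_of_normalCore_lt (hM : IsCoatom M) (hA : IsChiefFactor M.normalCore A) {B : Subgroup G}
    [B.Normal] (hNB : M.normalCore < B) : A ≤ B := by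
  have := hA.2.1
  rcases hA.2.2.2 (A ⊓ B) inferInstance (le_inf hA.2.2.1.le hNB.le) inf_le_left with h | h
  · have hBA : B ≤ A := by
      rw [← crownC_eq_of_isCoatom hM hA, le_crownC_iff, ← h, inf_comm]
      exact Subgroup.commutator_le_inf B A
    exact absurd ((inf_eq_right.mpr hBA).symm.trans h) hNB.ne'
  · exact inf_eq_left.mp h

theorem socAbove_normalCore_eq (hM : IsCoatom M) (hA : IsChiefFactor M.normalCore A) :
    socAbove M.normalCore = A :=
  le_antisymm (sInf_le ⟨hA.2.1, hA.2.2.1⟩)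
    (le_sInf fun _ ⟨_, hNB⟩ => le_of_normalCore_lt hM hA hNB)

end Primitive

section Crown

variable {Y X : Subgroup G} [Y.Normal]

instance crownR_normal : (crownR Y X).Normal := by
  refine ⟨fun x hx g => Subgroup.mem_sInf.mpr fun M ⟨hM, hMY⟩ => ?_⟩
  have hM' : M.comap (MulAut.conj g : G →* G) ∈ {M : Subgroup G |
      IsCoatom M ∧ IsGIso M.normalCore (socAbove M.normalCore) Y X} :=
    ⟨(Subgroup.isCoatom_comap _).mpr hM, by simpa only [Subgroup.normalCore_comap_conj] using hMY⟩
  exact Subgroup.mem_sInf.mp hx _ hM'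

theorem crownR_le {M : Subgroup G} (hM : IsCoatom M)
    (h : IsGIso M.normalCore (socAbove M.normalCore) Y X) : crownR Y X ≤ M :=
  sInf_le ⟨hM, h⟩

theorem exists_isCoatom_not_le_of_not_le_crownR {P : Subgroup G} (hP : ¬P ≤ crownR Y X) :
    ∃ M, IsCoatom M ∧ IsGIso M.normalCore (socAbove M.normalCore) Y X ∧ ¬P ≤ M := by
  contrapose! hP
  exact le_sInf fun M ⟨hM, hMY⟩ => hP M hM hMY

variable [Finite G] [Group.IsSolvable G]

theorem isGIso_of_minimal {W P : Subgroup G} [W.Normal] [P.Normal] (hRW : crownR Y X ≤ W)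
    (hPC : P ≤ crownC Y X) (hPW : ¬P ≤ W) (hmin : ∀ Q : Subgroup G, Q.Normal → Q < P → Q ≤ W) :
    IsGIso (P ⊓ W) P Y X := by
  obtain ⟨M, hM, hMY, hPM⟩ := exists_isCoatom_not_le_of_not_le_crownR fun h => hPW (h.trans hRW)
  obtain ⟨A, hA⟩ := exists_isChiefFactor_of_lt_top (M.normalCore_le.trans_lt hM.1.lt_top)
  have := hA.2.1
  rw [socAbove_normalCore_eq hM hA] at hMY
  have hPA : P ≤ A := hPC.trans (hMY.crownC_eq.symm.trans (crownC_eq_of_isCoatom hM hA)).le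
  have hPN : ¬P ≤ M.normalCore := fun h => hPM (h.trans M.normalCore_le)
  have hPNW : P ⊓ M.normalCore ≤ W :=
    hmin _ inferInstance (inf_le_left.lt_of_ne fun h => hPN (h ▸ inf_le_right))
  have hPWN : P ⊓ W ≤ M.normalCore := by
    by_contra h
    rw [hA.eq_sup_inf_of_not_le inf_le_left hPA h] at hPW
    exact hPW (sup_le inf_le_right hPNW)
  have hinf : M.normalCore ⊓ P = P ⊓ W :=
    le_antisymm (le_inf inf_le_right ((inf_comm _ _).le.trans hPNW)) (le_inf hPWN inf_le_left)
  have hsup : M.normalCore ⊔ P = A := (sup_comm _ _).trans (hA.sup_eq_of_not_le hPA hPN)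
  exact (isGIso_of_inf_eq_of_sup_eq hinf hsup).trans hMY

theorem isGIso_of_not_le_isCoatom {D M A : Subgroup G} [D.Normal] (hRD : crownR Y X ⊓ D = ⊥)
    (hC : crownR Y X ⊔ D = crownC Y X) (hM : IsCoatom M) (hDM : ¬D ≤ M)
    (hA : IsChiefFactor M.normalCore A) : IsGIso M.normalCore A Y X := by
  have := hA.2.1
  set N := M.normalCore
  set E := A ⊓ D
  set W := E ⊓ N ⊔ crownR Y X
  have hNE : N ⊔ E = A := by
    have hAND : A ≤ N ⊔ D :=
      le_of_normalCore_lt hM hA (left_lt_sup.mpr fun h => hDM (h.trans M.normalCore_le))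
    rw [← Subgroup.inf_normal_sup_eq_of_le hA.2.2.1.le, inf_eq_left.mpr hAND]
  have hWE : W ⊓ E = E ⊓ N := by
    have hER : E ⊓ crownR Y X = ⊥ := by
      rw [← le_bot_iff, ← hRD, inf_comm]
      exact inf_le_inf_left _ inf_le_right
    rw [inf_comm, Subgroup.inf_sup_normal_eq_of_le inf_le_left, hER, sup_bot_eq]
  have hEW : ¬E ≤ W := fun h => hA.2.2.1.ne' <| by
    rw [← hNE, sup_eq_left, ← inf_eq_right.mpr h, hWE]
    exact inf_le_right
  obtain ⟨P, ⟨hP, hPE, hPW⟩, hPmin⟩ :=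
    exists_minimal_of_wellFoundedLT (fun Q : Subgroup G => Q.Normal ∧ Q ≤ E ∧ ¬Q ≤ W)
      ⟨E, inferInstance, le_rfl, hEW⟩
  have hWP : W ⊔ P = W ⊔ E := by
    refine le_antisymm (sup_le_sup_left hPE _) (sup_le le_sup_left ?_)
    have hPN : ¬P ≤ N := fun h => hPW ((le_inf hPE h).trans le_sup_left)
    rw [hA.eq_sup_inf_of_not_le hPE inf_le_left hPN]
    exact sup_le le_sup_right (le_sup_left.trans le_sup_left)
  have hPY : IsGIso (P ⊓ W) P Y X :=
    isGIso_of_minimal le_sup_right (hPE.trans (inf_le_right.trans (hC ▸ le_sup_right))) hPW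
      fun Q hQ hQP => by_contra fun hQW => hQP.not_ge (hPmin ⟨hQ, hQP.le.trans hPE, hQW⟩ hQP.le)
  exact (isGIso_of_inf_eq_of_sup_eq (inf_comm N E) hNE).symm.trans <|
    (isGIso_of_inf_eq_of_sup_eq hWE rfl).trans <|
      (isGIso_of_inf_eq_of_sup_eq (inf_comm W P) hWP).symm.trans hPY

end Crown

end PaperCrown

theorem eq_top_of_sup_crown_general
    (G : Type*) [Group G] [Finite G] [Group.IsSolvable G]
    (Y X : Subgroup G) [Y.Normal]
    (D : Subgroup G) (hD : D.Normal)
    (hRD : crownR Y X ⊓ D = ⊥) (hC : crownR Y X ⊔ D = crownC Y X)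
    (H : Subgroup G) (hHD : H ⊔ D = ⊤) (hHR : H ⊔ crownR Y X = ⊤) :
    H = ⊤ := by
  by_contra hne
  obtain ⟨M, hM, hHM⟩ := (eq_top_or_exists_le_coatom H).resolve_left hne
  have hDM : ¬D ≤ M := fun h => hM.1 (top_unique (hHD ▸ sup_le hHM h))
  have hRM : ¬crownR Y X ≤ M := fun h => hM.1 (top_unique (hHR ▸ sup_le hHM h))
  obtain ⟨A, hA⟩ := exists_isChiefFactor_of_lt_top (M.normalCore_le.trans_lt hM.1.lt_top)
  refine hRM (crownR_le hM ?_)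
  rw [socAbove_normalCore_eq hM hA]
  exact isGIso_of_not_le_isCoatom hRD hC hM hDM hA

/-- Let `G` be a finite solvable group with trivial Frattini subgroup, and let
`C = R × D` be a crown decomposition as in Lemma `exists_crown_decomposition`
(`C = C_G(X/Y)`, `R = R_G(X/Y)` for a complemented chief factor `X/Y`, `D` a
nontrivial normal subgroup).  If `H ≤ G` satisfies `HD = HR = G`, then `H = G`. -/
theorem eq_top_of_sup_crown
    (G : Type*) [Group G] [Finite G] [Group.IsSolvable G] (hfrat : frattini G = ⊥)
    (Y X : Subgroup G) [Y.Normal] [X.Normal]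
    (hchief : IsChiefFactor Y X) (hcompl : IsComplemented' Y X)
    (D : Subgroup G) (hD : D.Normal) (hDbot : D ≠ ⊥)
    (hRD : crownR Y X ⊓ D = ⊥) (hC : crownR Y X ⊔ D = crownC Y X)
    (H : Subgroup G) (hHD : H ⊔ D = ⊤) (hHR : H ⊔ crownR Y X = ⊤) :
    H = ⊤ :=
  eq_top_of_sup_crown_general G Y X D hD hRD hC H hHD hHR
end

section
/- In the finite supersolvable group G_n = (V₁ × ⋯ × V_n) ⋊ H_n (with V_i one-dimensional over 𝔽_{p_i}, H_n cyclic of order 2^n acting on V_i through a character of order 2^i), the maximal subgroups of G_n are: (a) the unique maximal subgroup W ⋊ ⟨x_n²⟩ containing W = V₁ × ⋯ × V_n, and (b) for each 1 ≤ i ≤ n, exactly p_i conjugate maximal subgroups W_i ⋊ H_n^{v} of index p_i (v ∈ V_i), where W_i = ∏_{j≠i} V_j. -/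
open Subgroup Pointwise

section GnHelpers

variable {G : Type*} [Group G]

private lemma conj_map_eq_of_normal {N : Subgroup G} (hN : N.Normal) (g : G) :
    N.map (MulAut.conj g).toMonoidHom = N := by
  apply le_antisymm
  · rintro - ⟨n, hn, rfl⟩
    exact hN.conj_mem n hn g
  · intro y hy
    refine ⟨g⁻¹ * y * g, by simpa using hN.conj_mem y hy g⁻¹, ?_⟩
    simp [MulAut.conj_apply]
    group

private lemma conj_map_self {N : Subgroup G} {u : G} (hu : u ∈ N) :
    N.map (MulAut.conj u).toMonoidHom = N := by
  apply le_antisymm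
  · rintro - ⟨n, hn, rfl⟩
    exact N.mul_mem (N.mul_mem hu hn) (N.inv_mem hu)
  · intro y hy
    refine ⟨u⁻¹ * y * u, N.mul_mem (N.mul_mem (N.inv_mem hu) hy) hu, ?_⟩
    simp [MulAut.conj_apply]
    group

private lemma map_conj_mul (K : Subgroup G) (a b : G) :
    K.map (MulAut.conj (a * b)).toMonoidHom
      = (K.map (MulAut.conj b).toMonoidHom).map (MulAut.conj a).toMonoidHom := by
  rw [Subgroup.map_map]
  congr 1
  ext y
  simp [MulAut.conj_apply, mul_assoc]

private lemma normal_iSup' {ι : Sort*} {V : ι → Subgroup G} (h : ∀ i, (V i).Normal) :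
    (⨆ i, V i).Normal := by
  constructor
  intro m hm g
  have hmap : (⨆ i, V i).map (MulAut.conj g).toMonoidHom = ⨆ i, V i := by
    rw [Subgroup.map_iSup]
    exact iSup_congr fun i => conj_map_eq_of_normal (h i) g
  rw [← hmap]
  exact ⟨m, hm, rfl⟩

private lemma index_map_conj (K : Subgroup G) (g : G) :
    (K.map (MulAut.conj g).toMonoidHom).index = K.index :=
  Subgroup.index_map_eq K (MulAut.conj g).surjective
    (by rw [(MonoidHom.ker_eq_bot_iff _).mpr (MulAut.conj g).injective]; exact bot_le)

private lemma isCoatom_of_index_prime [Finite G] {M : Subgroup G} (h : M.index.Prime) :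
    IsCoatom M := by
  constructor
  · intro htop
    rw [htop, Subgroup.index_top] at h
    exact h.ne_one rfl
  · intro K hK
    rcases h.eq_one_or_self_of_dvd _ (Subgroup.index_dvd_of_le hK.le) with h1 | h1
    · exact Subgroup.index_eq_one.mp h1
    · exfalso
      have h2 := Subgroup.relIndex_mul_index hK.le
      rw [h1] at h2
      have h3 : M.relIndex K = 1 :=
        Nat.eq_of_mul_eq_mul_right h.pos (by rw [h2, one_mul])
      exact hK.not_ge (Subgroup.relIndex_eq_one.mp h3)

private lemma eq_of_le_of_index_eq' [Finite G] {H K : Subgroup G} (h : H ≤ K)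
    (hidx : H.index = K.index) : H = K := by
  have h1 := Subgroup.relIndex_mul_index h
  have hK0 : K.index ≠ 0 := Subgroup.index_ne_zero_of_finite
  have h3 : H.relIndex K = 1 :=
    Nat.eq_of_mul_eq_mul_right (Nat.pos_of_ne_zero hK0) (by rw [h1, hidx, one_mul])
  exact le_antisymm h (Subgroup.relIndex_eq_one.mp h3)

private lemma eq_bot_or_eq_of_card_prime [Finite G] {Vp K : Subgroup G} {q : ℕ}
    (hq : q.Prime) (hV : Nat.card Vp = q) (hK : K ≤ Vp) : K = ⊥ ∨ K = Vp := by
  have hdvd : Nat.card K ∣ q := hV ▸ Subgroup.card_dvd_of_le hK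
  rcases hq.eq_one_or_self_of_dvd _ hdvd with h1 | h1
  · exact Or.inl (Subgroup.card_eq_one.mp h1)
  · exact Or.inr (Subgroup.eq_of_le_of_card_ge hK (by rw [h1, hV]))

end GnHelpers


set_option maxHeartbeats 1000000 in

/-- The finite supersolvable group `G_n = (V₁ × ⋯ × V_n) ⋊ H_n`, where `V_i` is
cyclic of prime order `p_i` with `2^i ∣ p_i - 1`, `H_n = ⟨x⟩` is cyclic of order
`2^n`, and `x` acts on `V_i` through a character of order `2^i` (here described
abstractly: `G` is generated by the normal independent subgroups `V i` of order
`p i` together with `x`, and a power `x^j` centralizes a nontrivial element of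
`V i` exactly when `2^{i+1} ∣ j`).  Its maximal subgroups are:
(a) the unique maximal subgroup `W ⋊ ⟨x²⟩` containing `W = V₁ × ⋯ × V_n`, of
index `2`; and (b) for each `i`, exactly `p i` conjugate maximal subgroups
`W_i ⋊ ⟨x⟩^v` (`v ∈ V i`) of index `p i`, where `W_i = ∏_{j ≠ i} V_j`. -/
theorem maximal_subgroups_of_Gn
    (G : Type*) [Group G] [Finite G] (n : ℕ) (hn : 1 ≤ n)
    (p : Fin n → ℕ) (hp : ∀ i, (p i).Prime) (hmono : StrictMono p)
    (hdvd : ∀ i : Fin n, 2 ^ ((i : ℕ) + 1) ∣ p i - 1)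
    (x : G) (hx : orderOf x = 2 ^ n)
    (V : Fin n → Subgroup G) (hnorm : ∀ i, (V i).Normal)
    (hcard : ∀ i, Nat.card (V i) = p i)
    (hsup : (⨆ i, V i) ⊔ Subgroup.zpowers x = ⊤)
    (hinf : (⨆ i, V i) ⊓ Subgroup.zpowers x = ⊥)
    (hindep : ∀ i, V i ⊓ (⨆ j ∈ {j | j ≠ i}, V j) = ⊥)
    (hact : ∀ i, ∀ v ∈ V i, v ≠ 1 →
      ∀ j : ℕ, x ^ j * v = v * x ^ j ↔ 2 ^ ((i : ℕ) + 1) ∣ j) :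
    (∀ M : Subgroup G, IsCoatom M ↔
        (M = (⨆ i, V i) ⊔ Subgroup.zpowers (x ^ 2) ∨
          ∃ i, ∃ v ∈ V i, M = (⨆ j ∈ {j | j ≠ i}, V j) ⊔
            (Subgroup.zpowers x).map (MulAut.conj v).toMonoidHom)) ∧
      ((⨆ i, V i) ⊔ Subgroup.zpowers (x ^ 2)).index = 2 ∧
      (∀ M : Subgroup G, IsCoatom M → (⨆ i, V i) ≤ M →
        M = (⨆ i, V i) ⊔ Subgroup.zpowers (x ^ 2)) ∧
      (∀ i, ∀ v ∈ V i,
        ((⨆ j ∈ {j | j ≠ i}, V j) ⊔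
          (Subgroup.zpowers x).map (MulAut.conj v).toMonoidHom).index = p i) ∧
      (∀ i, Nat.card {M : Subgroup G // IsCoatom M ∧ M.index = p i} = p i) := by
  classical
  -- basic facts about the primes
  have hodd : ∀ i, ¬ (2 ∣ p i) := by
    intro i h2
    have h1 : (2:ℕ) ∣ p i - 1 := dvd_trans (dvd_pow_self 2 (Nat.succ_ne_zero _)) (hdvd i)
    have hpos : 1 ≤ p i := (hp i).one_lt.le
    have : (2:ℕ) ∣ 1 := by
      have := Nat.dvd_sub h2 h1
      rwa [Nat.sub_sub_self hpos] at this
    omega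
  -- disjointness and commutation
  have hleWi : ∀ i j : Fin n, j ≠ i → V j ≤ ⨆ k ∈ {k | k ≠ i}, V k := by
    intro i j hj
    exact le_iSup_of_le j (le_iSup_of_le hj le_rfl)
  have hWiW : ∀ i : Fin n, (⨆ j ∈ {j | j ≠ i}, V j) ≤ ⨆ j, V j :=
    fun i => iSup₂_le fun j _ => le_iSup V j
  have hVV : ∀ {i j : Fin n}, i ≠ j → Disjoint (V i) (V j) := by
    intro i j hij
    rw [disjoint_iff, eq_bot_iff, ← hindep i]
    exact le_inf inf_le_left (inf_le_right.trans (hleWi i j (Ne.symm hij)))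
  have hcomm : ∀ {i j : Fin n}, i ≠ j → ∀ a ∈ V i, ∀ b ∈ V j, Commute a b :=
    fun {i j} hij a ha b hb =>
      Subgroup.commute_of_normal_of_disjoint _ _ (hnorm i) (hnorm j) (hVV hij) a b ha hb
  have hWnormal : (⨆ i, V i).Normal := normal_iSup' hnorm
  have hWinormal : ∀ i, (⨆ j ∈ {j | j ≠ i}, V j).Normal :=
    fun i => normal_iSup' fun j => normal_iSup' fun _ => hnorm j
  have hVWi : ∀ i, Disjoint (V i) (⨆ j ∈ {j | j ≠ i}, V j) :=
    fun i => disjoint_iff.mpr (hindep i)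
  have hcommWi : ∀ i, ∀ v ∈ V i, ∀ u ∈ (⨆ j ∈ {j | j ≠ i}, V j), Commute u v :=
    fun i v hv u hu =>
      Subgroup.commute_of_normal_of_disjoint _ _ (hWinormal i) (hnorm i)
        (hVWi i).symm u v hu hv
  have hWsplit : ∀ i : Fin n, (⨆ j, V j) = V i ⊔ ⨆ j ∈ {j | j ≠ i}, V j := by
    intro i
    apply le_antisymm
    · refine iSup_le fun j => ?_
      by_cases hj : j = i
      · subst hj; exact le_sup_left
      · exact (hleWi i j hj).trans le_sup_right
    · exact sup_le (le_iSup V i) (hWiW i)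
  -- cardinalities
  haveI := hWnormal
  have hcompl : Subgroup.IsComplement' (⨆ i, V i) (Subgroup.zpowers x) :=
    Subgroup.isComplement'_of_disjoint_and_mul_eq_univ (disjoint_iff.mpr hinf)
      (by rw [← Subgroup.normal_mul, hsup, Subgroup.coe_top])
  have hcardH : Nat.card (Subgroup.zpowers x) = 2 ^ n := by
    rw [Nat.card_zpowers, hx]
  have hcardW : Nat.card (⨆ i, V i : Subgroup G) = ∏ i, p i := by
    have hpairwise : Pairwise fun i j : Fin n =>
        ∀ (a : V i) (b : V j), Commute ((V i).subtype a) ((V j).subtype b) :=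
      fun i j hij a b => hcomm hij a.1 a.2 b.1 b.2
    set f := MonoidHom.noncommPiCoprod (fun i => (V i).subtype) hpairwise with hf
    have hrange : f.range = ⨆ i, V i := by
      rw [hf, MonoidHom.noncommPiCoprod_range]
      exact iSup_congr fun i => Subgroup.range_subtype (V i)
    have hind : iSupIndep fun i => ((V i).subtype).range := by
      have : iSupIndep V := by
        rw [iSupIndep_def]
        intro i
        rw [disjoint_iff]
        exact hindep i
      simpa only [Subgroup.range_subtype] using this
    have hinj : Function.Injective f :=
      MonoidHom.injective_noncommPiCoprod_of_iSupIndep (fun i => (V i).subtype) hind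
        (fun i => Subgroup.subtype_injective _)
    calc Nat.card (⨆ i, V i : Subgroup G) = Nat.card f.range := by rw [hrange]
      _ = Nat.card (∀ i, V i) := Nat.card_congr (MonoidHom.ofInjective hinj).toEquiv.symm
      _ = ∏ i, Nat.card (V i) := Nat.card_pi
      _ = ∏ i, p i := by simp only [hcard]
  have hcardG : Nat.card G = Nat.card (⨆ i, V i : Subgroup G) * 2 ^ n := by
    rw [← hcardH, hcompl.card_mul]
  have hWodd : ¬ (2 ∣ Nat.card (⨆ i, V i : Subgroup G)) := by
    rw [hcardW]
    intro h
    obtain ⟨j, -, hj⟩ := (Nat.prime_two.prime.dvd_finset_prod_iff _).mp h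
    exact hodd j hj
  have hfactG : (Nat.card G).factorization 2 = n := by
    rw [hcardG, Nat.factorization_mul (by rintro h; rw [h] at hWodd; exact hWodd ⟨0, rfl⟩)
      (pow_ne_zero _ two_ne_zero), Finsupp.add_apply,
      Nat.factorization_eq_zero_of_not_dvd hWodd, Nat.Prime.factorization_pow Nat.prime_two,
      Finsupp.single_eq_same, zero_add]
  -- index of the subgroups W_i ⊔ H^v
  have hNindex : ∀ i : Fin n, ((⨆ j ∈ {j | j ≠ i}, V j) ⊔ Subgroup.zpowers x).index = p i := by
    intro i
    haveI := hWinormal i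
    haveI := hnorm i
    have hdisjN : Disjoint (V i) ((⨆ j ∈ {j | j ≠ i}, V j) ⊔ Subgroup.zpowers x) := by
      rw [disjoint_iff, eq_bot_iff]
      rintro y hy
      rw [Subgroup.mem_inf] at hy
      obtain ⟨hy1, hy2⟩ := hy
      have hy3 : y ∈ ((⨆ j ∈ {j | j ≠ i}, V j : Subgroup G) : Set G) *
          ((Subgroup.zpowers x : Subgroup G) : Set G) := by
        rw [← Subgroup.normal_mul]
        exact hy2
      obtain ⟨u, hu, h, hh, rfl⟩ := hy3
      have hhW : h ∈ (⨆ j, V j) ⊓ Subgroup.zpowers x := by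
        refine ⟨?_, hh⟩
        have : h = u⁻¹ * (u * h) := by group
        rw [this]
        exact Subgroup.mul_mem _ (Subgroup.inv_mem _ (hWiW i hu)) (le_iSup V i hy1)
      rw [hinf] at hhW
      have hh1 : h = 1 := Subgroup.mem_bot.mp hhW
      subst hh1
      simp only [mul_one] at hy1 ⊢
      have : u ∈ V i ⊓ ⨆ j ∈ {j | j ≠ i}, V j := ⟨hy1, hu⟩
      rw [hindep i] at this
      exact this
    have hcomplN : Subgroup.IsComplement' (V i)
        ((⨆ j ∈ {j | j ≠ i}, V j) ⊔ Subgroup.zpowers x) := by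
      refine Subgroup.isComplement'_of_disjoint_and_mul_eq_univ hdisjN ?_
      rw [← Subgroup.normal_mul, ← sup_assoc, ← hWsplit i, hsup, Subgroup.coe_top]
    rw [hcomplN.index_eq_card, hcard i]
  have hNv_eq : ∀ i : Fin n, ∀ v : G,
      (⨆ j ∈ {j | j ≠ i}, V j) ⊔ (Subgroup.zpowers x).map (MulAut.conj v).toMonoidHom
        = ((⨆ j ∈ {j | j ≠ i}, V j) ⊔ Subgroup.zpowers x).map (MulAut.conj v).toMonoidHom := by
    intro i v
    rw [Subgroup.map_sup, conj_map_eq_of_normal (hWinormal i)]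
  have hNvindex : ∀ i : Fin n, ∀ v ∈ V i,
      ((⨆ j ∈ {j | j ≠ i}, V j) ⊔
        (Subgroup.zpowers x).map (MulAut.conj v).toMonoidHom).index = p i := by
    intro i v _
    rw [hNv_eq i v, index_map_conj, hNindex i]
  -- index of W ⊔ ⟨x²⟩
  have hAindex : ((⨆ i, V i) ⊔ Subgroup.zpowers (x ^ 2)).index = 2 := by
    set π := QuotientGroup.mk' (⨆ i, V i) with hπ
    have hπs : Function.Surjective π := QuotientGroup.mk'_surjective _
    have hker : π.ker = ⨆ i, V i := QuotientGroup.ker_mk' _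
    have hmapW : (⨆ i, V i).map π = ⊥ := by
      rw [eq_bot_iff]
      rintro - ⟨w, hw, rfl⟩
      simpa [Subgroup.mem_bot, hπ] using (QuotientGroup.eq_one_iff w).mpr hw
    have htop : Subgroup.zpowers (π x) = ⊤ := by
      have h1 : ((⨆ i, V i) ⊔ Subgroup.zpowers x).map π = ⊤ := by
        rw [hsup]
        exact Subgroup.map_top_of_surjective _ hπs
      rwa [Subgroup.map_sup, hmapW, bot_sup_eq, MonoidHom.map_zpowers] at h1
    have hxbar : orderOf (π x) = 2 ^ n := by
      have h1 : (π x) ^ (2 ^ n) = 1 := by rw [← map_pow, ← hx, pow_orderOf_eq_one, map_one]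
      have h2 : orderOf (π x) ∣ 2 ^ n := orderOf_dvd_of_pow_eq_one h1
      have h3 : x ^ orderOf (π x) ∈ (⨆ i, V i) := by
        have h3' : π (x ^ orderOf (π x)) = 1 := by rw [map_pow, pow_orderOf_eq_one]
        exact (QuotientGroup.eq_one_iff _).mp h3'
      have h4 : x ^ orderOf (π x) = 1 := by
        have hmem : x ^ orderOf (π x) ∈ (⨆ i, V i) ⊓ Subgroup.zpowers x :=
          ⟨h3, Subgroup.pow_mem _ (Subgroup.mem_zpowers x) _⟩
        rw [hinf] at hmem
        exact Subgroup.mem_bot.mp hmem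
      have h5 : 2 ^ n ∣ orderOf (π x) := hx ▸ orderOf_dvd_of_pow_eq_one h4
      exact Nat.dvd_antisymm h2 h5
    have hcardQ : Nat.card (G ⧸ (⨆ i, V i)) = 2 ^ n := by
      rw [← Subgroup.card_top, ← htop, Nat.card_zpowers, hxbar]
    have hx2 : orderOf ((π x) ^ 2) = 2 ^ (n - 1) := by
      rw [orderOf_pow, hxbar]
      have hgcd : Nat.gcd (2 ^ n) 2 = 2 :=
        Nat.gcd_eq_right (dvd_pow_self 2 (by omega))
      rw [hgcd]
      have h0 : (2:ℕ) ^ n = 2 ^ (n - 1) * 2 := by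
        rw [← pow_succ]
        congr 1
        omega
      rw [h0, Nat.mul_div_cancel _ (by omega)]
    have hA : ((⨆ i, V i) ⊔ Subgroup.zpowers (x ^ 2))
        = Subgroup.comap π (Subgroup.zpowers ((π x) ^ 2)) := by
      rw [← map_pow, ← MonoidHom.map_zpowers, Subgroup.comap_map_eq, hker, sup_comm]
    rw [hA, Subgroup.index_comap_of_surjective _ hπs]
    have h1 : Nat.card (Subgroup.zpowers ((π x) ^ 2)) = 2 ^ (n - 1) := by
      rw [Nat.card_zpowers, hx2]
    have h2 := Subgroup.card_mul_index (Subgroup.zpowers ((π x) ^ 2))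
    rw [h1, hcardQ] at h2
    have h3 : (2:ℕ) ^ n = 2 ^ (n - 1) * 2 := by
      rw [← pow_succ]
      congr 1
      omega
    rw [h3] at h2
    exact Nat.eq_of_mul_eq_mul_left (by positivity) h2
  have hAne : ((⨆ i, V i) ⊔ Subgroup.zpowers (x ^ 2)) ≠ ⊤ := by
    intro ht
    rw [ht, Subgroup.index_top] at hAindex
    omega
  have hAcoatom : IsCoatom ((⨆ i, V i) ⊔ Subgroup.zpowers (x ^ 2)) :=
    isCoatom_of_index_prime (by rw [hAindex]; exact Nat.prime_two)
  have hNvcoatom : ∀ i : Fin n, ∀ v ∈ V i,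
      IsCoatom ((⨆ j ∈ {j | j ≠ i}, V j) ⊔
        (Subgroup.zpowers x).map (MulAut.conj v).toMonoidHom) :=
    fun i v hv => isCoatom_of_index_prime (by rw [hNvindex i v hv]; exact hp i)
  -- the unique maximal subgroup above W
  have hle_of_ne_top : ∀ M : Subgroup G, (⨆ i, V i) ≤ M → M ≠ ⊤ →
      M ≤ (⨆ i, V i) ⊔ Subgroup.zpowers (x ^ 2) := by
    intro M hWM hMtop m hm
    have hm1 : m ∈ ((⨆ i, V i : Subgroup G) : Set G) *
        ((Subgroup.zpowers x : Subgroup G) : Set G) := by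
      rw [← Subgroup.normal_mul, hsup]
      trivial
    obtain ⟨w, hw, h, hh, rfl⟩ := hm1
    obtain ⟨k, hk0⟩ := hh
    have hk : x ^ k = h := hk0
    rcases Int.even_or_odd k with ⟨a, hk2⟩ | ⟨a, hk2⟩
    · refine Subgroup.mul_mem _ (Subgroup.mem_sup_left hw) (Subgroup.mem_sup_right ?_)
      have hxa : x ^ k = (x ^ 2) ^ a := by
        rw [← zpow_natCast x 2, ← zpow_mul]
        congr 1
        omega
      rw [← hk, hxa]
      exact zpow_mem (Subgroup.mem_zpowers _) a
    · exfalso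
      apply hMtop
      have hxk : x ^ k ∈ M := by
        have he : x ^ k = w⁻¹ * (w * x ^ k) := by group
        rw [he, hk]
        exact Subgroup.mul_mem _ (Subgroup.inv_mem _ (hWM hw)) hm
      have hcop : IsCoprime ((2:ℤ) ^ n) k := by
        have : IsCoprime (2:ℤ) k := ⟨-a, 1, by rw [hk2]; ring⟩
        exact this.pow_left
      obtain ⟨c, d, hcd⟩ := hcop
      have hpow1 : x ^ ((2:ℤ) ^ n) = 1 := by
        have h2 : ((2:ℤ) ^ n) = ((2 ^ n : ℕ) : ℤ) := by push_cast; ring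
        rw [h2, zpow_natCast, ← hx, pow_orderOf_eq_one]
      have hxeq : x = (x ^ k) ^ d := by
        conv_lhs => rw [← zpow_one x, ← hcd]
        rw [zpow_add, mul_comm c, zpow_mul, hpow1, one_zpow, one_mul, mul_comm d, zpow_mul]
      have hxM : x ∈ M := by
        rw [hxeq]
        exact zpow_mem hxk d
      rw [eq_top_iff, ← hsup]
      exact sup_le hWM ((Subgroup.zpowers_le).mpr hxM)
  have huniq : ∀ M : Subgroup G, IsCoatom M → (⨆ i, V i) ≤ M →
      M = (⨆ i, V i) ⊔ Subgroup.zpowers (x ^ 2) := by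
    intro M hM hWM
    have hMle := hle_of_ne_top M hWM hM.1
    rcases eq_or_lt_of_le hMle with h | h
    · exact h
    · exact absurd (hM.2 _ h) hAne
  -- index of a coatom not containing V j
  have hidxM : ∀ (M : Subgroup G) (j : Fin n), IsCoatom M → ¬ V j ≤ M → M.index = p j := by
    intro M j hM hVjM
    haveI := hnorm j
    have hsupM : V j ⊔ M = ⊤ := by
      apply hM.2
      rw [lt_iff_le_and_ne]
      exact ⟨le_sup_right, fun h => hVjM (le_sup_left.trans h.ge)⟩
    have hdisjM : Disjoint (V j) M := by
      rcases eq_bot_or_eq_of_card_prime (hp j) (hcard j)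
          (inf_le_left : V j ⊓ M ≤ V j) with h | h
      · exact disjoint_iff.mpr h
      · exact absurd (inf_eq_left.mp h) hVjM
    have hcomplM : Subgroup.IsComplement' (V j) M :=
      Subgroup.isComplement'_of_disjoint_and_mul_eq_univ hdisjM
        (by rw [← Subgroup.normal_mul, hsupM, Subgroup.coe_top])
    rw [hcomplM.index_eq_card, hcard j]
  -- classification of coatoms
  have hclass : ∀ M : Subgroup G, IsCoatom M →
      (M = (⨆ i, V i) ⊔ Subgroup.zpowers (x ^ 2) ∨
        ∃ i, ∃ v ∈ V i, M = (⨆ j ∈ {j | j ≠ i}, V j) ⊔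
          (Subgroup.zpowers x).map (MulAut.conj v).toMonoidHom) := by
    intro M hM
    by_cases hWM : (⨆ i, V i) ≤ M
    · exact Or.inl (huniq M hM hWM)
    right
    obtain ⟨i, hVi⟩ : ∃ i, ¬ V i ≤ M := by
      by_contra hcon
      push_neg at hcon
      exact hWM (iSup_le hcon)
    have hMidx : M.index = p i := hidxM M i hM hVi
    have hWiM : (⨆ j ∈ {j | j ≠ i}, V j) ≤ M := by
      refine iSup₂_le fun j hj => ?_
      by_contra hj'
      exact hj (hmono.injective (by rw [← hidxM M j hM hj', hMidx]))
    -- cardinality of M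
    have hcardM : Nat.card M * p i = Nat.card G := by
      rw [← hMidx]
      exact Subgroup.card_mul_index M
    have hprodsplit : (∏ j, p j) = p i * ∏ j ∈ Finset.univ.erase i, p j :=
      (Finset.mul_prod_erase Finset.univ p (Finset.mem_univ i)).symm
    have hcardM' : Nat.card M = (∏ j ∈ Finset.univ.erase i, p j) * 2 ^ n := by
      have heq : Nat.card M * p i = ((∏ j ∈ Finset.univ.erase i, p j) * 2 ^ n) * p i := by
        rw [hcardM, hcardG, hcardW, hprodsplit]
        ring
      exact Nat.eq_of_mul_eq_mul_right (hp i).pos heq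
    have herodd : ¬ (2:ℕ) ∣ ∏ j ∈ Finset.univ.erase i, p j := by
      intro hdd
      obtain ⟨j, -, hj⟩ := (Nat.prime_two.prime.dvd_finset_prod_iff _).mp hdd
      exact hodd j hj
    have hfactM : (Nat.card M).factorization 2 = n := by
      rw [hcardM', Nat.factorization_mul
        (by rintro h0; rw [h0] at herodd; exact herodd ⟨0, rfl⟩)
        (pow_ne_zero _ two_ne_zero), Finsupp.add_apply,
        Nat.factorization_eq_zero_of_not_dvd herodd,
        Nat.Prime.factorization_pow Nat.prime_two, Finsupp.single_eq_same, zero_add]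
    -- Sylow 2-subgroups
    obtain ⟨Q⟩ : Nonempty (Sylow 2 M) := inferInstance
    have hcardQ : Nat.card Q = 2 ^ n := by
      rw [Q.card_eq_multiplicity, hfactM]
    have hP0card : Nat.card ((Q : Subgroup M).map M.subtype) = 2 ^ n := by
      rw [← hcardQ]
      exact (Nat.card_congr
        ((Q : Subgroup M).equivMapOfInjective M.subtype M.subtype_injective).toEquiv).symm
    have hP0le : (Q : Subgroup M).map M.subtype ≤ M := Subgroup.map_subtype_le _
    have hfact2 : Nat.card ((Q : Subgroup M).map M.subtype)
        = 2 ^ (Nat.card G).factorization 2 := by rw [hP0card, hfactG]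
    have hHfact : Nat.card (Subgroup.zpowers x) = 2 ^ (Nat.card G).factorization 2 := by
      rw [hcardH, hfactG]
    obtain ⟨g, hg⟩ := MulAction.exists_smul_eq G (Sylow.ofCard (Subgroup.zpowers x) hHfact)
      (Sylow.ofCard ((Q : Subgroup M).map M.subtype) hfact2)
    have hgsub : (Subgroup.zpowers x).map (MulAut.conj g).toMonoidHom
        = (Q : Subgroup M).map M.subtype := by
      have h1 := congrArg (fun P : Sylow 2 G => (P : Subgroup G)) hg
      exact h1
    -- decompose g = w * x^k, w = v * u
    have hgmem : g ∈ ((⨆ i, V i : Subgroup G) : Set G) *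
        ((Subgroup.zpowers x : Subgroup G) : Set G) := by
      rw [← Subgroup.normal_mul, hsup]
      trivial
    obtain ⟨w, hw, h, hh, hg20⟩ := hgmem
    have hg2 : w * h = g := hg20
    obtain ⟨k, hk0⟩ := hh
    have hk : x ^ k = h := hk0
    have hconjh : (Subgroup.zpowers x).map (MulAut.conj h).toMonoidHom = Subgroup.zpowers x := by
      rw [← hk]
      exact conj_map_self (zpow_mem (Subgroup.mem_zpowers x) k)
    have hgsub' : (Subgroup.zpowers x).map (MulAut.conj w).toMonoidHom
        = (Q : Subgroup M).map M.subtype := by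
      rw [← hgsub, ← hg2, map_conj_mul, hconjh]
    haveI := hnorm i
    have hwmem : w ∈ ((V i : Subgroup G) : Set G) *
        ((⨆ j ∈ {j | j ≠ i}, V j : Subgroup G) : Set G) := by
      rw [← Subgroup.normal_mul, ← hWsplit i]
      exact hw
    obtain ⟨v, hv, u, hu, hw20⟩ := hwmem
    have hw2 : v * u = w := hw20
    refine ⟨i, v, hv, ?_⟩
    have huv : u * v = v * u := hcommWi i v hv u hu
    have hNmap : ((⨆ j ∈ {j | j ≠ i}, V j) ⊔
          (Subgroup.zpowers x).map (MulAut.conj v).toMonoidHom).map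
          (MulAut.conj u).toMonoidHom
        = (⨆ j ∈ {j | j ≠ i}, V j) ⊔
          (Subgroup.zpowers x).map (MulAut.conj w).toMonoidHom := by
      rw [Subgroup.map_sup, conj_map_eq_of_normal (hWinormal i), ← map_conj_mul, huv, hw2]
    have hN1 : (⨆ j ∈ {j | j ≠ i}, V j) ⊔
          (Subgroup.zpowers x).map (MulAut.conj v).toMonoidHom
        = (⨆ j ∈ {j | j ≠ i}, V j) ⊔
          (Subgroup.zpowers x).map (MulAut.conj w).toMonoidHom := by
      rw [← hNmap]
      exact (conj_map_self (Subgroup.mem_sup_left hu)).symm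
    have hNleM : (⨆ j ∈ {j | j ≠ i}, V j) ⊔
        (Subgroup.zpowers x).map (MulAut.conj v).toMonoidHom ≤ M := by
      rw [hN1]
      exact sup_le hWiM (by rw [hgsub']; exact hP0le)
    exact (eq_of_le_of_index_eq' hNleM (by rw [hNvindex i v hv, hMidx])).symm
  -- injectivity of v ↦ W_i ⊔ H^v
  have hNv_inj : ∀ i : Fin n, ∀ v ∈ V i, ∀ v' ∈ V i,
      ((⨆ j ∈ {j | j ≠ i}, V j) ⊔ (Subgroup.zpowers x).map (MulAut.conj v).toMonoidHom)
        = ((⨆ j ∈ {j | j ≠ i}, V j) ⊔ (Subgroup.zpowers x).map (MulAut.conj v').toMonoidHom)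
      → v = v' := by
    intro i v hv v' hv' heq
    haveI := hWinormal i
    have hmem : v' * x * v'⁻¹ ∈ ((⨆ j ∈ {j | j ≠ i}, V j) ⊔
        (Subgroup.zpowers x).map (MulAut.conj v).toMonoidHom) := by
      rw [heq]
      exact Subgroup.mem_sup_right ⟨x, Subgroup.mem_zpowers x, rfl⟩
    have hmem' : v' * x * v'⁻¹ ∈ ((⨆ j ∈ {j | j ≠ i}, V j : Subgroup G) : Set G) *
        (((Subgroup.zpowers x).map (MulAut.conj v).toMonoidHom : Subgroup G) : Set G) := by
      rw [← Subgroup.normal_mul]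
      exact hmem
    obtain ⟨u, hu, z, hz, hzeq0⟩ := hmem'
    have hzeq : u * z = v' * x * v'⁻¹ := hzeq0
    obtain ⟨h0, hh0, hz2⟩ := hz
    obtain ⟨k, hk0⟩ := hh0
    have hk : x ^ k = h0 := hk0
    have hz3 : z = v * x ^ k * v⁻¹ := by
      rw [← hz2, ← hk]
      rfl
    have haV : v' * x * v'⁻¹ * x⁻¹ ∈ V i := by
      have he : v' * x * v'⁻¹ * x⁻¹ = v' * (x * v'⁻¹ * x⁻¹) := by group
      rw [he]
      exact Subgroup.mul_mem _ hv' ((hnorm i).conj_mem _ (Subgroup.inv_mem _ hv') x)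
    have hbV : v * x ^ k * v⁻¹ * (x ^ k)⁻¹ ∈ V i := by
      have he : v * x ^ k * v⁻¹ * (x ^ k)⁻¹ = v * (x ^ k * v⁻¹ * (x ^ k)⁻¹) := by group
      rw [he]
      exact Subgroup.mul_mem _ hv ((hnorm i).conj_mem _ (Subgroup.inv_mem _ hv) (x ^ k))
    set a := v' * x * v'⁻¹ * x⁻¹ with ha
    set b := v * x ^ k * v⁻¹ * (x ^ k)⁻¹ with hb
    have h1 : u * (b * x ^ k) = a * x := by
      rw [hb, ha]
      have hb1 : v * x ^ k * v⁻¹ * (x ^ k)⁻¹ * x ^ k = v * x ^ k * v⁻¹ := by group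
      have ha1 : v' * x * v'⁻¹ * x⁻¹ * x = v' * x * v'⁻¹ := by group
      rw [hb1, ha1, ← hz3, hzeq]
    have h2 : (u * b)⁻¹ * a = x ^ k * x⁻¹ := by
      have : (u * b)⁻¹ * (a * x) * x⁻¹ = x ^ k * x⁻¹ := by
        rw [← h1]
        group
      rw [← this]
      group
    have hWmem : (u * b)⁻¹ * a ∈ (⨆ j, V j) :=
      Subgroup.mul_mem _ (Subgroup.inv_mem _ (Subgroup.mul_mem _ (hWiW i hu)
        (le_iSup V i hbV))) (le_iSup V i haV)
    have hHmem : (u * b)⁻¹ * a ∈ Subgroup.zpowers x := by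
      rw [h2]
      exact Subgroup.mul_mem _ (zpow_mem (Subgroup.mem_zpowers x) k)
        (Subgroup.inv_mem _ (Subgroup.mem_zpowers x))
    have hone : (u * b)⁻¹ * a = 1 := by
      have hmm : (u * b)⁻¹ * a ∈ (⨆ i, V i) ⊓ Subgroup.zpowers x := ⟨hWmem, hHmem⟩
      rw [hinf] at hmm
      exact Subgroup.mem_bot.mp hmm
    have hxk1 : x ^ k * x⁻¹ = 1 := by rw [← h2, hone]
    have hab : a = u * b := (inv_mul_eq_one.mp hone).symm
    have huVi : u ∈ V i := by
      have : u = a * b⁻¹ := by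
        rw [hab]
        group
      rw [this]
      exact Subgroup.mul_mem _ haV (Subgroup.inv_mem _ hbV)
    have hu1 : u = 1 := by
      have hmm : u ∈ V i ⊓ ⨆ j ∈ {j | j ≠ i}, V j := ⟨huVi, hu⟩
      rw [hindep i] at hmm
      exact Subgroup.mem_bot.mp hmm
    have hxkx : x ^ k = x := mul_inv_eq_one.mp hxk1
    have hfinal : v' * x * v'⁻¹ = v * x * v⁻¹ := by
      have h3 : a = b := by rw [hab, hu1, one_mul]
      have h4 : a * x = b * x ^ k := by rw [h3, hxkx]
      have h5 : v' * x * v'⁻¹ = a * x := by rw [ha]; group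
      have h6 : v * x * v⁻¹ = b * x ^ k := by rw [hb, hxkx]; group
      rw [h5, h6, h4]
    have hcx : x * (v⁻¹ * v') = (v⁻¹ * v') * x := by
      have : v⁻¹ * (v' * x * v'⁻¹) * v = v⁻¹ * (v * x * v⁻¹) * v := by rw [hfinal]
      calc x * (v⁻¹ * v') = v⁻¹ * (v * x * v⁻¹) * v * (v⁻¹ * v') := by group
        _ = v⁻¹ * (v' * x * v'⁻¹) * v * (v⁻¹ * v') := by rw [hfinal]
        _ = (v⁻¹ * v') * x := by group
    by_contra hne
    have hcne : v⁻¹ * v' ≠ 1 := fun hc => hne (inv_mul_eq_one.mp hc)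
    have := (hact i (v⁻¹ * v') (Subgroup.mul_mem _ (Subgroup.inv_mem _ hv) hv') hcne 1).mp
      (by simpa using hcx)
    have h7 : 2 ^ ((i : ℕ) + 1) ≤ 1 := Nat.le_of_dvd one_pos this
    have h8 : 2 ≤ 2 ^ ((i : ℕ) + 1) := by
      calc (2:ℕ) = 2 ^ 1 := (pow_one 2).symm
        _ ≤ 2 ^ ((i : ℕ) + 1) := Nat.pow_le_pow_right (by omega) (by omega)
    omega
  -- counting
  have hcount : ∀ i : Fin n,
      Nat.card {M : Subgroup G // IsCoatom M ∧ M.index = p i} = p i := by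
    intro i
    have hbij : Nat.card (V i) = Nat.card {M : Subgroup G // IsCoatom M ∧ M.index = p i} := by
      refine Nat.card_eq_of_bijective
        (fun v : V i => (⟨(⨆ j ∈ {j | j ≠ i}, V j) ⊔
            (Subgroup.zpowers x).map (MulAut.conj v.1).toMonoidHom,
          hNvcoatom i v.1 v.2, hNvindex i v.1 v.2⟩ :
            {M : Subgroup G // IsCoatom M ∧ M.index = p i})) ⟨?_, ?_⟩
      · intro v v' h
        exact Subtype.ext (hNv_inj i v.1 v.2 v'.1 v'.2 (congrArg Subtype.val h))
      · rintro ⟨M, hM, hMi⟩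
        rcases hclass M hM with h | ⟨j, v, hvj, rfl⟩
        · exfalso
          rw [h, hAindex] at hMi
          have := hodd i
          omega
        · have hji : j = i := hmono.injective (by rw [← hNvindex j v hvj, hMi])
          subst hji
          exact ⟨⟨v, hvj⟩, rfl⟩
    rw [← hbij, hcard i]
  refine ⟨?_, hAindex, huniq, hNvindex, hcount⟩
  intro M
  constructor
  · exact hclass M
  · rintro (rfl | ⟨i, v, hv, rfl⟩)
    · exact hAcoatom
    · exact hNvcoatom i v hv
end
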